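/- arXiv:2303.18003 — 8 statements merged into one kernel-verified Lean document; each statement's English description precedes it below -/
import Mathlib

section
/- If neither the complement of H₁ nor the complement of H₂ is a linear forest, then the family of (H₁,H₂)-free finite simple graphs is not near optimal colourable; that is, for every constant c there exists an (H₁,H₂)-free graph G with χ(G) > max{c, ω(G)}. -/
open SimpleGraph

/-- The join `G ∨ H` of two graphs: the disjoint union of `G` and `H` together with
all edges between the two parts. -/
def SimpleGraph.join {α β : Type*} (G : SimpleGraph α) (H : SimpleGraph β) :
    SimpleGraph (α ⊕ β) where
  Adj u v := match u, v with
    | Sum.inl u, Sum.inl v => G.Adj u v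
    | Sum.inr u, Sum.inr v => H.Adj u v
    | Sum.inl _, Sum.inr _ => True
    | Sum.inr _, Sum.inl _ => True
  symm := ⟨fun u v => match u, v with
    | Sum.inl u, Sum.inl v => fun h => G.adj_symm h
    | Sum.inr u, Sum.inr v => fun h => H.adj_symm h
    | Sum.inl _, Sum.inr _ => fun _ => trivial
    | Sum.inr _, Sum.inl _ => fun _ => trivial⟩
  loopless := ⟨fun u => by cases u <;> simp⟩

/-- `G` is `H`-free: `G` has no induced subgraph isomorphic to `H`
(no graph embedding of `H` into `G`). -/
def SimpleGraph.HFree {α β : Type*} (G : SimpleGraph α) (H : SimpleGraph β) : Prop :=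
  ¬ Nonempty (H ↪g G)

/-- `2K₂`: the disjoint union of two copies of `K₂`. -/
def twoK2 : SimpleGraph (Fin 2 ⊕ Fin 2) :=
  (⊤ : SimpleGraph (Fin 2)) ⊕g (⊤ : SimpleGraph (Fin 2))

/-- `P₄ ∨ Kₙ`: the join of the path on `4` vertices with the complete graph on `n` vertices. -/
def P4JoinK (n : ℕ) : SimpleGraph (Fin 4 ⊕ Fin n) :=
  SimpleGraph.join (pathGraph 4) (⊤ : SimpleGraph (Fin n))

/-- A graph is a linear forest if every connected component is a path; equivalently,
it is acyclic and every vertex has degree at most `2`. -/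
def SimpleGraph.IsLinearForest {V : Type*} (G : SimpleGraph V) : Prop :=
  G.IsAcyclic ∧ ∀ v : V, (G.neighborSet v).ncard ≤ 2

lemma support_eq_map_getVert {V : Type*} {G : SimpleGraph V} {u v : V} (p : G.Walk u v) :
    p.support = (List.range (p.length + 1)).map p.getVert := by
  induction p with
  | nil => simp [List.range_succ]
  | @cons a b c h q ih =>
    rw [Walk.support_cons, Walk.length_cons, List.range_succ_eq_map]
    simp only [List.map_cons, Walk.getVert_zero, List.map_map]
    congr 1

lemma cycle_getVert_ne {V : Type*} {G : SimpleGraph V} {u : V} {p : G.Walk u u}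
    (hp : p.IsCycle) : p.getVert 1 ≠ p.getVert (p.length - 1) := by
  have hL : 3 ≤ p.length := hp.three_le_length
  have hnd : p.support.tail.Nodup := (Walk.isCycle_def _ |>.mp hp).2.2
  have htail : p.support.tail = (List.range p.length).map (fun i => p.getVert (i + 1)) := by
    rw [support_eq_map_getVert p, List.range_succ_eq_map]
    simp [List.map_map]
  rw [htail] at hnd
  intro he
  have h0 : ((List.range p.length).map (fun i => p.getVert (i + 1)))[0]'(by simp; omega)
      = p.getVert 1 := by simp
  have h1 : ((List.range p.length).map (fun i => p.getVert (i + 1)))[p.length - 2]'(by simp; omega)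
      = p.getVert (p.length - 1) := by
    simp
    congr 1
    omega
  have := (hnd.getElem_inj_iff (hi := by simp; omega) (hj := by simp; omega)).mp
    (h0.trans (he.trans h1.symm))
  omega

lemma cycle_two_adj {V : Type*} {G : SimpleGraph V} {u : V} {p : G.Walk u u}
    (hp : p.IsCycle) : ∃ a b : V, a ≠ b ∧ a ∈ p.support ∧ b ∈ p.support ∧
      G.Adj u a ∧ G.Adj u b := by
  have hL : 3 ≤ p.length := hp.three_le_length
  refine ⟨p.getVert 1, p.getVert (p.length - 1), cycle_getVert_ne hp, ?_, ?_, ?_, ?_⟩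
  · exact Walk.mem_support_iff_exists_getVert.mpr ⟨1, rfl, by omega⟩
  · exact Walk.mem_support_iff_exists_getVert.mpr ⟨p.length - 1, rfl, by omega⟩
  · have := p.adj_getVert_succ (i := 0) (by omega)
    simpa using this
  · have := p.adj_getVert_succ (i := p.length - 1) (by omega)
    have h2 : p.length - 1 + 1 = p.length := by omega
    rw [h2, p.getVert_length] at this
    exact this.symm

-- closure of cycle support under adjacency in cycleGraph
lemma cycle_support_closed {n : ℕ} (hn : 5 ≤ n) {u : Fin n} {p : (cycleGraph n).Walk u u}
    (hp : p.IsCycle) : ∀ x ∈ p.support, ∀ y, (cycleGraph n).Adj x y → y ∈ p.support := by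
  intro x hx y hxy
  obtain ⟨m, rfl⟩ : ∃ m, n = m + 2 := ⟨n - 2, by omega⟩
  have hq : (p.rotate x hx).IsCycle := hp.rotate hx
  obtain ⟨a, b, hab, ha, hb, haa, hbb⟩ := cycle_two_adj hq
  -- a b ∈ neighborSet x = {x-1, x+1}, distinct, so y ∈ {a, b}
  have hns : (cycleGraph (m + 2)).neighborSet x = {x - 1, x + 1} := cycleGraph_neighborSet
  have ha' : a ∈ ({x - 1, x + 1} : Set (Fin (m + 2))) := hns ▸ haa
  have hb' : b ∈ ({x - 1, x + 1} : Set (Fin (m + 2))) := hns ▸ hbb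
  have hy' : y ∈ ({x - 1, x + 1} : Set (Fin (m + 2))) := hns ▸ hxy
  have hyab : y = a ∨ y = b := by
    simp only [Set.mem_insert_iff, Set.mem_singleton_iff] at ha' hb' hy'
    rcases ha' with rfl | rfl <;> rcases hb' with rfl | rfl <;> rcases hy' with rfl | rfl <;>
      tauto
  have hmem : ∀ z ∈ (p.rotate x hx).support, z ∈ p.support := by
    intro z hz
    classical
    have h1 : z ∈ (p.rotate x hx).toSubgraph.verts := (Walk.mem_verts_toSubgraph _).mpr hz
    rw [Walk.toSubgraph_rotate] at h1
    exact (Walk.mem_verts_toSubgraph _).mp h1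
  rcases hyab with rfl | rfl
  · exact hmem _ ha
  · exact hmem _ hb

lemma cycle_support_univ {n : ℕ} (hn : 5 ≤ n) {u : Fin n} {p : (cycleGraph n).Walk u u}
    (hp : p.IsCycle) : ∀ y : Fin n, y ∈ p.support := by
  intro y
  obtain ⟨w⟩ := (cycleGraph_preconnected (n := n) u y)
  have key : ∀ {a b : Fin n} (w : (cycleGraph n).Walk a b), a ∈ p.support → b ∈ p.support := by
    intro a b w
    induction w with
    | nil => exact id
    | @cons s t _ h q ih => exact fun hs => ih (cycle_support_closed hn hp s hs t h)
  exact key w p.start_mem_support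

open Fin.NatCast in
lemma fin_cast_ne_zero {n : ℕ} [NeZero n] (a : ℕ) (h0 : 0 < a) (h : a < n) : (a : Fin n) ≠ 0 := by
  intro he
  have : ((a : ℕ) : Fin n).val = a := Fin.val_cast_of_lt h
  rw [he] at this
  simp at this
  omega

open Fin.CommRing in
lemma adj_succ {n : ℕ} (h5 : 5 ≤ n) (y : Fin n) :
    letI : NeZero n := ⟨by omega⟩
    (cycleGraph n).Adj y (y + 1) := by
  haveI : NeZero n := ⟨by omega⟩
  obtain ⟨m, rfl⟩ : ∃ m, n = m + 2 := ⟨n - 2, by omega⟩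
  rw [cycleGraph_adj]
  right
  ring_nf

open Fin.CommRing in
lemma no_triangle {n : ℕ} (h5 : 5 ≤ n) {x y z : Fin n} (hxy : (cycleGraph n).Adj x y)
    (hxz : (cycleGraph n).Adj x z) (hyz : (cycleGraph n).Adj y z) : False := by
  haveI : NeZero n := ⟨by omega⟩
  obtain ⟨m, rfl⟩ : ∃ m, n = m + 2 := ⟨n - 2, by omega⟩
  rw [cycleGraph_adj] at hxy hxz hyz
  have h1' : ((1:ℕ) : Fin (m+2)) ≠ 0 := fin_cast_ne_zero 1 (by omega) (by omega)
  have h3' : ((3:ℕ) : Fin (m+2)) ≠ 0 := fin_cast_ne_zero 3 (by omega) (by omega)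
  have hA : (1 : Fin (m+2)) + 1 ≠ 1 := by
    intro he
    apply h1'
    push_cast
    linear_combination he
  have hB : (1 : Fin (m+2)) + 1 + 1 ≠ 0 := by
    intro he
    apply h3'
    push_cast
    linear_combination he
  rcases hxy with h1 | h1 <;> rcases hxz with h4 | h4 <;> rcases hyz with h6 | h6 <;>
    first
      | (exact hA (by linear_combination h1 + h4 + h6))
      | (exact hA (by linear_combination h1 + h4 - h6))
      | (exact hA (by linear_combination h1 - h4 + h6))
      | (exact hA (by linear_combination h1 - h4 - h6))
      | (exact hA (by linear_combination - h1 + h4 + h6))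
      | (exact hA (by linear_combination - h1 + h4 - h6))
      | (exact hA (by linear_combination - h1 - h4 + h6))
      | (exact hA (by linear_combination - h1 - h4 - h6))
      | (exact hB (by linear_combination h1 + h4 + h6))
      | (exact hB (by linear_combination h1 + h4 - h6))
      | (exact hB (by linear_combination h1 - h4 + h6))
      | (exact hB (by linear_combination h1 - h4 - h6))
      | (exact hB (by linear_combination - h1 + h4 + h6))
      | (exact hB (by linear_combination - h1 + h4 - h6))
      | (exact hB (by linear_combination - h1 - h4 + h6))
      | (exact hB (by linear_combination - h1 - h4 - h6))

/-- complement an embedding -/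
def embCompl {α V : Type*} {H : SimpleGraph α} {G : SimpleGraph V} (f : H ↪g Gᶜ) :
    Hᶜ ↪g G where
  toEmbedding := f.toEmbedding
  map_rel_iff' := by
    intro a b
    by_cases hab : a = b
    · subst hab
      simp
    · have h1 : Gᶜ.Adj (f a) (f b) ↔ H.Adj a b := f.map_adj_iff
      have h2 : f a ≠ f b := fun h => hab (f.injective h)
      simp only [compl_adj, h2, true_and, ne_eq] at h1
      simp only [compl_adj, hab, not_false_iff, true_and, ne_eq]
      tauto

lemma free_of_small {n : ℕ} (hn : 5 ≤ n) {γ : Type} [Fintype γ] (H : SimpleGraph γ)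
    (h : ¬ Hᶜ.IsLinearForest) (hcard : Fintype.card γ < n) :
    ((cycleGraph n)ᶜ).HFree H := by
  rintro ⟨f⟩
  have f' : Hᶜ ↪g cycleGraph n := embCompl f
  rw [SimpleGraph.IsLinearForest, not_and_or] at h
  rcases h with h | h
  · -- there is a cycle
    rw [SimpleGraph.IsAcyclic] at h
    push_neg at h
    obtain ⟨v, p, hp⟩ := h
    have hq : (p.map f'.toHom).IsCycle :=
      (Walk.map_isCycle_iff_of_injective f'.injective).mpr hp
    have hsurj : Function.Surjective f' := by
      intro y
      have hy := cycle_support_univ hn hq y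
      rw [Walk.support_map] at hy
      obtain ⟨x, hx, hfx⟩ := List.mem_map.mp hy
      exact ⟨x, hfx⟩
    have := Fintype.card_le_of_surjective _ hsurj
    simp only [Fintype.card_fin] at this
    omega
  · push_neg at h
    obtain ⟨v, hv⟩ := h
    obtain ⟨m, rfl⟩ : ∃ m, n = m + 2 := ⟨n - 2, by omega⟩
    have himg : f' '' (Hᶜ.neighborSet v) ⊆ {f' v - 1, f' v + 1} := by
      rintro _ ⟨w, hw, rfl⟩
      have : (cycleGraph (m + 2)).Adj (f' v) (f' w) := f'.map_adj_iff.mpr hw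
      rw [← cycleGraph_neighborSet]
      exact this
    have h1 : (Hᶜ.neighborSet v).ncard = (f' '' (Hᶜ.neighborSet v)).ncard :=
      (Set.ncard_image_of_injective _ f'.injective).symm
    have h2 : (f' '' (Hᶜ.neighborSet v)).ncard ≤ ({f' v - 1, f' v + 1} : Set (Fin (m+2))).ncard :=
      Set.ncard_le_ncard himg (Set.toFinite _)
    have h3 : ({f' v - 1, f' v + 1} : Set (Fin (m+2))).ncard ≤ 2 :=
      le_trans (Set.ncard_insert_le _ _) (by simp)
    omega

lemma cliqueNum_le {K n : ℕ} (hn : n = 2 * K + 1) (h5 : 5 ≤ n) :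
    ((cycleGraph n)ᶜ).cliqueNum ≤ K := by
  haveI : NeZero n := ⟨by omega⟩
  classical
  obtain ⟨s, hs⟩ := ((cycleGraph n)ᶜ).exists_isNClique_cliqueNum
  obtain ⟨hclique, hcard⟩ := hs
  rw [← hcard]
  by_contra hgt
  push_neg at hgt
  set t : Finset (Fin n) := s.image (· + 1) with ht
  have hdisj : Disjoint s t := by
    rw [Finset.disjoint_right]
    intro x hxt hxs
    rw [ht, Finset.mem_image] at hxt
    obtain ⟨y, hy, rfl⟩ := hxt
    have hne : y ≠ y + 1 := by
      intro he
      have : (cycleGraph n).Adj y (y + 1) := adj_succ h5 y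
      rw [← he] at this
      exact (cycleGraph n).loopless.irrefl y this
    have hadj := hclique (by simpa using hy) (by simpa using hxs) hne
    rw [compl_adj] at hadj
    exact hadj.2 (adj_succ h5 y)
  have htcard : t.card = s.card := Finset.card_image_of_injective _ (add_left_injective 1)
  have : s.card + t.card ≤ n := by
    rw [← Finset.card_union_of_disjoint hdisj]
    simpa using Finset.card_le_card (Finset.subset_univ (s ∪ t))
  omega

lemma not_colorable {K n : ℕ} (hn : n = 2 * K + 1) (h5 : 5 ≤ n) :
    ¬ ((cycleGraph n)ᶜ).Colorable K := by
  classical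
  rintro ⟨C⟩
  have fib : ∀ i : Fin K, (Finset.univ.filter (fun v => C v = i)).card ≤ 2 := by
    intro i
    by_contra hgt
    push_neg at hgt
    obtain ⟨u, hu, hucard⟩ := Finset.exists_subset_card_eq hgt
    obtain ⟨x, y, z, hxy, hxz, hyz, rfl⟩ := Finset.card_eq_three.mp hucard
    have hsame : ∀ a ∈ ({x, y, z} : Finset (Fin n)), C a = i := by
      intro a ha
      have := hu ha
      simpa using this
    have hadj : ∀ a ∈ ({x, y, z} : Finset (Fin n)), ∀ b ∈ ({x, y, z} : Finset (Fin n)),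
        a ≠ b → (cycleGraph n).Adj a b := by
      intro a ha b hb hab
      by_contra hnadj
      have : ((cycleGraph n)ᶜ).Adj a b := ⟨hab, hnadj⟩
      exact C.valid this (by rw [hsame a ha, hsame b hb])
    have m1 : x ∈ ({x, y, z} : Finset (Fin n)) := by simp
    have m2 : y ∈ ({x, y, z} : Finset (Fin n)) := by simp
    have m3 : z ∈ ({x, y, z} : Finset (Fin n)) := by simp
    exact no_triangle h5 (hadj x m1 y m2 hxy) (hadj x m1 z m3 hxz) (hadj y m2 z m3 hyz)
  have hsum := Finset.card_eq_sum_card_fiberwise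
    (f := C) (s := (Finset.univ : Finset (Fin n))) (t := (Finset.univ : Finset (Fin K)))
    (by simp)
  have : (Finset.univ : Finset (Fin n)).card ≤ 2 * K := by
    rw [hsum]
    calc ∑ i : Fin K, (Finset.univ.filter (fun v => C v = i)).card
        ≤ ∑ _i : Fin K, 2 := Finset.sum_le_sum (fun i _ => fib i)
      _ = 2 * K := by simp [mul_comm]
  simp at this
  omega

/-- If neither the complement of `H₁` nor the complement of `H₂` is a linear forest, then
the family of `(H₁,H₂)`-free finite simple graphs is not near optimal colourable. -/
theorem stmt2 {α β : Type} [Fintype α] [Fintype β]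
    (H₁ : SimpleGraph α) (H₂ : SimpleGraph β)
    (h₁ : ¬ H₁ᶜ.IsLinearForest) (h₂ : ¬ H₂ᶜ.IsLinearForest) :
    ∀ c : ℕ, ∃ (m : ℕ) (G : SimpleGraph (Fin m)),
      G.HFree H₁ ∧ G.HFree H₂ ∧ ↑(max c G.cliqueNum) < G.chromaticNumber := by
  intro c
  set K : ℕ := max c (max (Fintype.card α) (Fintype.card β)) + 2 with hK
  set n : ℕ := 2 * K + 1 with hn
  have h5 : 5 ≤ n := by omega
  refine ⟨n, (cycleGraph n)ᶜ, ?_, ?_, ?_⟩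
  · exact free_of_small h5 H₁ h₁ (by omega)
  · exact free_of_small h5 H₂ h₂ (by omega)
  · have hcol : ¬ ((cycleGraph n)ᶜ).Colorable K := not_colorable hn h5
    have hlt : (K : ℕ∞) < ((cycleGraph n)ᶜ).chromaticNumber := by
      by_contra hle
      push_neg at hle
      exact hcol (chromaticNumber_le_iff_colorable.mp hle)
    refine lt_of_le_of_lt ?_ hlt
    have : max c ((cycleGraph n)ᶜ).cliqueNum ≤ K := by
      have := cliqueNum_le (K := K) (n := n) hn h5
      omega
    exact_mod_cast Nat.cast_le.mpr this
end

section
/- If a graph H is a forest and its complement is also a forest, then H is isomorphic to an induced subgraph of P₄. -/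
open SimpleGraph

/-! ### Auxiliary material -/

instance decPathAdj {n : ℕ} : DecidableRel (pathGraph n).Adj := fun _ _ =>
  decidable_of_iff _ (pathGraph_adj).symm

lemma aux_acyclic_of_emb {V W : Type*} {G : SimpleGraph V} {G' : SimpleGraph W}
    (f : G ↪g G') (h : G'.IsAcyclic) : G.IsAcyclic := fun _ c hc =>
  h (c.map f.toHom) (hc.map f.injective)

/-- An embedding of the complement of an induced subgraph into the complement. -/
def auxEmbCompl {V W : Type*} (f : V ↪ W) (H : SimpleGraph W) : (H.comap f)ᶜ ↪g Hᶜ where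
  toEmbedding := f
  map_rel_iff' := by intro a b; simp [compl_adj, f.injective.ne_iff]

lemma aux_noC3 {V : Type*} {G : SimpleGraph V} (h : G.IsAcyclic) {a b c : V}
    (hab : G.Adj a b) (hbc : G.Adj b c) (hca : G.Adj c a) : False := by
  refine h (.cons hab (.cons hbc (.cons hca .nil))) ?_
  simp [Walk.isCycle_def, Walk.isTrail_def, List.nodup_cons, hab.ne, hbc.ne, hca.ne,
    hab.ne', hbc.ne', hca.ne', Sym2.eq_iff]

lemma aux_noC4 {V : Type*} {G : SimpleGraph V} (h : G.IsAcyclic) {a b c d : V}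
    (hac : a ≠ c) (hbd : b ≠ d)
    (hab : G.Adj a b) (hbc : G.Adj b c) (hcd : G.Adj c d) (hda : G.Adj d a) : False := by
  refine h (.cons hab (.cons hbc (.cons hcd (.cons hda .nil)))) ?_
  simp [Walk.isCycle_def, Walk.isTrail_def, List.nodup_cons, hab.ne, hbc.ne, hcd.ne, hda.ne,
    hab.ne', hbc.ne', hcd.ne', hda.ne', hac, hbd, hac.symm, hbd.symm, Sym2.eq_iff]

lemma aux_noC5 {V : Type*} {G : SimpleGraph V} (h : G.IsAcyclic) {a b c d e : V}
    (hac : a ≠ c) (had : a ≠ d) (hbd : b ≠ d) (hbe : b ≠ e) (hce : c ≠ e)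
    (hab : G.Adj a b) (hbc : G.Adj b c) (hcd : G.Adj c d) (hde : G.Adj d e)
    (hea : G.Adj e a) : False := by
  refine h (.cons hab (.cons hbc (.cons hcd (.cons hde (.cons hea .nil))))) ?_
  simp [Walk.isCycle_def, Walk.isTrail_def, List.nodup_cons, hab.ne, hbc.ne, hcd.ne, hde.ne,
    hea.ne, hab.ne', hbc.ne', hcd.ne', hde.ne', hea.ne', hac, had, hbd, hbe, hce,
    hac.symm, had.symm, hbd.symm, hbe.symm, hce.symm, Sym2.eq_iff]

/-- No triangle, with ordered vertices. -/
abbrev C3Free {n : ℕ} (G : SimpleGraph (Fin n)) : Prop :=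
  ∀ i j k : Fin n, i < j → j < k → ¬(G.Adj i j ∧ G.Adj j k ∧ G.Adj i k)

/-- No 4-cycle. -/
abbrev C4Free {n : ℕ} (G : SimpleGraph (Fin n)) : Prop :=
  ∀ a b c d : Fin n, a ≠ c → b ≠ d → ¬(G.Adj a b ∧ G.Adj b c ∧ G.Adj c d ∧ G.Adj d a)

/-- No 5-cycle. -/
abbrev C5Free {n : ℕ} (G : SimpleGraph (Fin n)) : Prop :=
  ∀ a b c d e : Fin n, a ≠ c → a ≠ d → b ≠ d → b ≠ e → c ≠ e →
    ¬(G.Adj a b ∧ G.Adj b c ∧ G.Adj c d ∧ G.Adj d e ∧ G.Adj e a)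

lemma aux_c3free {n : ℕ} {G : SimpleGraph (Fin n)} (h : G.IsAcyclic) : C3Free G :=
  fun _ _ _ _ _ ⟨hab, hbc, hac⟩ => aux_noC3 h hab hbc hac.symm

lemma aux_c4free {n : ℕ} {G : SimpleGraph (Fin n)} (h : G.IsAcyclic) : C4Free G :=
  fun _ _ _ _ hac hbd ⟨hab, hbc, hcd, hda⟩ => aux_noC4 h hac hbd hab hbc hcd hda

lemma aux_c5free {n : ℕ} {G : SimpleGraph (Fin n)} (h : G.IsAcyclic) : C5Free G :=
  fun _ _ _ _ _ hac had hbd hbe hce ⟨hab, hbc, hcd, hde, hea⟩ =>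
    aux_noC5 h hac had hbd hbe hce hab hbc hcd hde hea

/-- The conclusion we want for graphs on `Fin n`. -/
abbrev GoodEmb {n : ℕ} (G : SimpleGraph (Fin n)) : Prop :=
  ∃ p : Fin n → Fin 4, Function.Injective p ∧
    ∀ i j, (pathGraph 4).Adj (p i) (p j) ↔ G.Adj i j

def adj2 (b01 : Bool) : Fin 2 → Fin 2 → Bool := ![![false,b01], ![b01,false]]
def adj3 (b01 b02 b12 : Bool) : Fin 3 → Fin 3 → Bool :=
  ![![false,b01,b02], ![b01,false,b12], ![b02,b12,false]]
def adj4 (b01 b02 b03 b12 b13 b23 : Bool) : Fin 4 → Fin 4 → Bool :=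
  ![![false,b01,b02,b03], ![b01,false,b12,b13], ![b02,b12,false,b23], ![b03,b13,b23,false]]
def adj5 (b01 b02 b03 b04 b12 b13 b14 b23 b24 b34 : Bool) : Fin 5 → Fin 5 → Bool :=
  ![![false,b01,b02,b03,b04], ![b01,false,b12,b13,b14], ![b02,b12,false,b23,b24],
    ![b03,b13,b23,false,b34], ![b04,b14,b24,b34,false]]

def g2 (b01 : Bool) : SimpleGraph (Fin 2) where
  Adj i j := adj2 b01 i j = true
  symm := ⟨by intro i j; fin_cases i <;> fin_cases j <;> simp [adj2]⟩
  loopless := ⟨by intro i; fin_cases i <;> simp [adj2]⟩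

def g3 (b01 b02 b12 : Bool) : SimpleGraph (Fin 3) where
  Adj i j := adj3 b01 b02 b12 i j = true
  symm := ⟨by intro i j; fin_cases i <;> fin_cases j <;> simp [adj3]⟩
  loopless := ⟨by intro i; fin_cases i <;> simp [adj3]⟩

def g4 (b01 b02 b03 b12 b13 b23 : Bool) : SimpleGraph (Fin 4) where
  Adj i j := adj4 b01 b02 b03 b12 b13 b23 i j = true
  symm := ⟨by intro i j; fin_cases i <;> fin_cases j <;> simp [adj4]⟩
  loopless := ⟨by intro i; fin_cases i <;> simp [adj4]⟩

def g5 (b01 b02 b03 b04 b12 b13 b14 b23 b24 b34 : Bool) : SimpleGraph (Fin 5) where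
  Adj i j := adj5 b01 b02 b03 b04 b12 b13 b14 b23 b24 b34 i j = true
  symm := ⟨by intro i j; fin_cases i <;> fin_cases j <;> simp [adj5]⟩
  loopless := ⟨by intro i; fin_cases i <;> simp [adj5]⟩

instance (b01 : Bool) : DecidableRel (g2 b01).Adj :=
  fun _ _ => inferInstanceAs (Decidable (_ = true))
instance (b01 b02 b12 : Bool) : DecidableRel (g3 b01 b02 b12).Adj :=
  fun _ _ => inferInstanceAs (Decidable (_ = true))
instance (b01 b02 b03 b12 b13 b23 : Bool) : DecidableRel (g4 b01 b02 b03 b12 b13 b23).Adj :=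
  fun _ _ => inferInstanceAs (Decidable (_ = true))
instance (b01 b02 b03 b04 b12 b13 b14 b23 b24 b34 : Bool) :
    DecidableRel (g5 b01 b02 b03 b04 b12 b13 b14 b23 b24 b34).Adj :=
  fun _ _ => inferInstanceAs (Decidable (_ = true))

set_option synthInstance.maxSize 2000 in
set_option synthInstance.maxHeartbeats 1000000 in
set_option maxHeartbeats 4000000 in
set_option maxRecDepth 20000 in
theorem key2 : ∀ b01 : Bool, GoodEmb (g2 b01) := by decide

set_option synthInstance.maxSize 2000 in
set_option synthInstance.maxHeartbeats 1000000 in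
set_option maxHeartbeats 4000000 in
set_option maxRecDepth 20000 in
theorem key3 : ∀ b01 b02 b12 : Bool,
    C3Free (g3 b01 b02 b12) → C3Free (g3 b01 b02 b12)ᶜ → GoodEmb (g3 b01 b02 b12) := by decide

set_option synthInstance.maxSize 2000 in
set_option synthInstance.maxHeartbeats 1000000 in
set_option maxHeartbeats 4000000 in
set_option maxRecDepth 20000 in
theorem key4 : ∀ b01 b02 b03 b12 b13 b23 : Bool,
    C3Free (g4 b01 b02 b03 b12 b13 b23) → C3Free (g4 b01 b02 b03 b12 b13 b23)ᶜ →
    C4Free (g4 b01 b02 b03 b12 b13 b23) → C4Free (g4 b01 b02 b03 b12 b13 b23)ᶜ →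
    GoodEmb (g4 b01 b02 b03 b12 b13 b23) := by decide

set_option synthInstance.maxSize 2000 in
set_option synthInstance.maxHeartbeats 1000000 in
set_option maxHeartbeats 8000000 in
set_option maxRecDepth 20000 in
theorem key5 : ∀ b01 b02 b03 b04 b12 b13 b14 b23 b24 b34 : Bool,
    C3Free (g5 b01 b02 b03 b04 b12 b13 b14 b23 b24 b34) →
    C3Free (g5 b01 b02 b03 b04 b12 b13 b14 b23 b24 b34)ᶜ →
    C5Free (g5 b01 b02 b03 b04 b12 b13 b14 b23 b24 b34) → False := by decide

lemma eq2 (G : SimpleGraph (Fin 2)) [DecidableRel G.Adj] :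
    G = g2 (decide (G.Adj 0 1)) := by
  ext i j
  fin_cases i <;> fin_cases j <;>
    simp [g2, adj2, decide_eq_true_eq] <;> exact G.adj_comm _ _

lemma eq3 (G : SimpleGraph (Fin 3)) [DecidableRel G.Adj] :
    G = g3 (decide (G.Adj 0 1)) (decide (G.Adj 0 2)) (decide (G.Adj 1 2)) := by
  ext i j
  fin_cases i <;> fin_cases j <;>
    simp [g3, adj3, decide_eq_true_eq] <;> exact G.adj_comm _ _

lemma eq4 (G : SimpleGraph (Fin 4)) [DecidableRel G.Adj] :
    G = g4 (decide (G.Adj 0 1)) (decide (G.Adj 0 2)) (decide (G.Adj 0 3))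
      (decide (G.Adj 1 2)) (decide (G.Adj 1 3)) (decide (G.Adj 2 3)) := by
  ext i j
  fin_cases i <;> fin_cases j <;>
    simp [g4, adj4, decide_eq_true_eq] <;> exact G.adj_comm _ _

lemma eq5 (G : SimpleGraph (Fin 5)) [DecidableRel G.Adj] :
    G = g5 (decide (G.Adj 0 1)) (decide (G.Adj 0 2)) (decide (G.Adj 0 3)) (decide (G.Adj 0 4))
      (decide (G.Adj 1 2)) (decide (G.Adj 1 3)) (decide (G.Adj 1 4))
      (decide (G.Adj 2 3)) (decide (G.Adj 2 4)) (decide (G.Adj 3 4)) := by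
  ext i j
  fin_cases i <;> fin_cases j <;>
    simp [g5, adj5, decide_eq_true_eq] <;> exact G.adj_comm _ _

lemma finCase (n : ℕ) (hn : n ≤ 4) (G : SimpleGraph (Fin n))
    (a1 : G.IsAcyclic) (a2 : Gᶜ.IsAcyclic) : GoodEmb G := by
  classical
  interval_cases n
  · exact ⟨Fin.elim0, fun a => a.elim0, fun i => i.elim0⟩
  · refine ⟨fun _ => 0, fun a b _ => Subsingleton.elim a b, ?_⟩
    intro i j
    fin_cases i; fin_cases j
    simp [pathGraph_adj]
  · rw [eq2 G]; exact key2 _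
  · rw [eq3 G] at a1 a2 ⊢
    exact key3 _ _ _ (aux_c3free a1) (aux_c3free a2)
  · rw [eq4 G] at a1 a2 ⊢
    exact key4 _ _ _ _ _ _ (aux_c3free a1) (aux_c3free a2) (aux_c4free a1) (aux_c4free a2)

/-- If a graph `H` is both a forest and a complement of a forest, then `H` is isomorphic
to an induced subgraph of `P₄`. -/
theorem stmt6 {α : Type} [Fintype α] (H : SimpleGraph α)
    (h1 : H.IsAcyclic) (h2 : Hᶜ.IsAcyclic) :
    Nonempty (H ↪g pathGraph 4) := by
  classical
  by_cases hc : Fintype.card α ≤ 4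
  · set e := Fintype.equivFin α with he
    set G' := H.comap ⇑(e.symm.toEmbedding) with hG'
    have hH1 : G'.IsAcyclic := aux_acyclic_of_emb (Embedding.comap e.symm.toEmbedding H) h1
    have hH2 : G'ᶜ.IsAcyclic := aux_acyclic_of_emb (auxEmbCompl e.symm.toEmbedding H) h2
    obtain ⟨p, hp, hiff⟩ := finCase _ hc G' hH1 hH2
    refine ⟨⟨⟨fun a => p (e a), fun a b hab => e.injective (hp hab)⟩, ?_⟩⟩
    intro a b
    show (pathGraph 4).Adj (p (e a)) (p (e b)) ↔ H.Adj a b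
    rw [hiff]
    simp [hG']
  · have h5 : Fintype.card (Fin 5) ≤ Fintype.card α := by simp; omega
    obtain ⟨φ⟩ := Function.Embedding.nonempty_iff_card_le.mpr h5
    set G' := H.comap ⇑φ with hG'
    have hH1 : G'.IsAcyclic := aux_acyclic_of_emb (Embedding.comap φ H) h1
    have hH2 : G'ᶜ.IsAcyclic := aux_acyclic_of_emb (auxEmbCompl φ H) h2
    rw [eq5 G'] at hH1 hH2
    exact (key5 _ _ _ _ _ _ _ _ _ _ (aux_c3free hH1) (aux_c3free hH2) (aux_c5free hH1)).elim
end

section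
/- For every positive integer n, the family of (2K₂, P₄ ∨ Kₙ)-free finite simple graphs is near optimal colourable; that is, there is a constant c (depending on n) such that every (2K₂, P₄ ∨ Kₙ)-free graph G satisfies χ(G) ≤ max{c, ω(G)}. -/
open SimpleGraph

lemma no2K2 {V : Type*} {G : SimpleGraph V} (h2 : G.HFree twoK2) {a b c d : V}
    (hab : G.Adj a b) (hcd : G.Adj c d)
    (hac : ¬G.Adj a c) (had : ¬G.Adj a d) (hbc : ¬G.Adj b c) (hbd : ¬G.Adj b d)
    (neac : a ≠ c) (nead : a ≠ d) (nebc : b ≠ c) (nebd : b ≠ d) : False := by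
  have hba := hab.symm
  have hdc := hcd.symm
  have hca : ¬G.Adj c a := fun h => hac h.symm
  have hda : ¬G.Adj d a := fun h => had h.symm
  have hcb : ¬G.Adj c b := fun h => hbc h.symm
  have hdb : ¬G.Adj d b := fun h => hbd h.symm
  apply h2
  refine ⟨⟨⟨Sum.elim ![a,b] ![c,d], ?_⟩, ?_⟩⟩
  · rintro (i|i) (j|j) h <;> simp only [Sum.elim_inl, Sum.elim_inr] at h <;>
      fin_cases i <;> fin_cases j <;> simp_all [hab.ne, hcd.ne, hab.ne', hcd.ne']
  · rintro (i|i) (j|j) <;> generalize_proofs <;> fin_cases i <;> fin_cases j <;>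
      simp_all [twoK2, SimpleGraph.sum]

lemma noP4K {V : Type*} {G : SimpleGraph V} {n : ℕ} (hP : G.HFree (P4JoinK n))
    {a b c d : V} {S : Finset V}
    (hab : G.Adj a b) (hbc : G.Adj b c) (hcd : G.Adj c d)
    (hac : ¬G.Adj a c) (had : ¬G.Adj a d) (hbd : ¬G.Adj b d)
    (neac : a ≠ c) (nead : a ≠ d) (nebd : b ≠ d)
    (hcard : S.card = n)
    (hSclique : ∀ s ∈ S, ∀ t ∈ S, s ≠ t → G.Adj s t)
    (hSa : ∀ s ∈ S, G.Adj a s) (hSb : ∀ s ∈ S, G.Adj b s)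
    (hSc : ∀ s ∈ S, G.Adj c s) (hSd : ∀ s ∈ S, G.Adj d s) : False := by
  classical
  have hba := hab.symm; have hcb := hbc.symm; have hdc := hcd.symm
  have hca : ¬G.Adj c a := fun h => hac h.symm
  have hda : ¬G.Adj d a := fun h => had h.symm
  have hdb : ¬G.Adj d b := fun h => hbd h.symm
  set g : Fin n → V := fun j => ↑(S.equivFin.symm (Fin.cast hcard.symm j)) with hg
  have hgmem : ∀ j, g j ∈ S := fun j => (S.equivFin.symm (Fin.cast hcard.symm j)).2
  have hginj : Function.Injective g := by
    intro j j' h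
    have := Subtype.ext (p := fun x => x ∈ S) h
    have := S.equivFin.symm.injective this
    simpa [Fin.ext_iff] using congrArg Fin.val this
  have hne : ∀ j, g j ≠ a ∧ g j ≠ b ∧ g j ≠ c ∧ g j ≠ d := by
    intro j
    refine ⟨?_, ?_, ?_, ?_⟩ <;> intro h
    · exact G.loopless.irrefl a (by simpa [h] using hSa _ (hgmem j))
    · exact G.loopless.irrefl b (by simpa [h] using hSb _ (hgmem j))
    · exact G.loopless.irrefl c (by simpa [h] using hSc _ (hgmem j))
    · exact G.loopless.irrefl d (by simpa [h] using hSd _ (hgmem j))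
  apply hP
  refine ⟨⟨⟨Sum.elim ![a,b,c,d] g, ?_⟩, ?_⟩⟩
  · rintro (i|j) (i'|j') h <;> simp only [Sum.elim_inl, Sum.elim_inr] at h
    · fin_cases i <;> fin_cases i' <;>
        simp_all [hab.ne, hbc.ne, hcd.ne, hab.ne', hbc.ne', hcd.ne']
    · exfalso; have := hne j'; fin_cases i <;> simp_all
    · exfalso; have := hne j; fin_cases i' <;> simp_all
    · exact congrArg Sum.inr (hginj h)
  · rintro (i|j) (i'|j')
    · show G.Adj _ _ ↔ (pathGraph 4).Adj i i'
      fin_cases i <;> fin_cases i' <;>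
        simp_all [pathGraph_adj, Sum.elim_inl, Matrix.cons_val_zero, Matrix.cons_val_one] <;> decide
    · show G.Adj _ (g j') ↔ True
      simp only [iff_true, Sum.elim_inl]
      fin_cases i
      · exact hSa _ (hgmem j')
      · exact hSb _ (hgmem j')
      · exact hSc _ (hgmem j')
      · exact hSd _ (hgmem j')
    · show G.Adj (g j) _ ↔ True
      simp only [iff_true, Sum.elim_inr]
      fin_cases i'
      · exact (hSa _ (hgmem j)).symm
      · exact (hSb _ (hgmem j)).symm
      · exact (hSc _ (hgmem j)).symm
      · exact (hSd _ (hgmem j)).symm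
    · show G.Adj (g j) (g j') ↔ (⊤ : SimpleGraph (Fin n)).Adj j j'
      simp only [top_adj]
      constructor
      · intro h hjj'; exact G.loopless.irrefl _ (hjj' ▸ h)
      · intro h; exact hSclique _ (hgmem j) _ (hgmem j') (fun hh => h (hginj hh))

section Key
variable {V : Type*} {G : SimpleGraph V} [DecidableEq V] [DecidableRel G.Adj]

lemma key {n : ℕ} (hn : 1 ≤ n)
    (h2 : G.HFree twoK2) (hP : G.HFree (P4JoinK n))
    {K : Finset V} (hK : G.IsClique (K : Set V)) (hω : 3 * n + 3 ≤ K.card)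
    (hmax : ∀ s : Finset V, G.IsClique (s : Set V) → s.card ≤ K.card)
    {u : V} (hu : u ∉ K) {D : Finset V} (hD : ∀ v ∈ D, v ∉ K) (huD : u ∉ D)
    {f : V → V} (hf : ∀ v ∈ D, f v ∈ K ∧ ¬G.Adj v (f v))
    (hsize : ∀ v ∈ D,
      (K.filter fun z => ¬G.Adj v z).card ≤ (K.filter fun z => ¬G.Adj u z).card) :
    ∃ x ∈ K, ¬G.Adj u x ∧ ∀ v ∈ D, G.Adj u v → f v ≠ x := by
  classical
  by_contra hcon
  push_neg at hcon
  set M : V → Finset V := fun v => K.filter fun z => ¬G.Adj v z with hM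
  set A : V → Finset V := fun v => K.filter fun z => G.Adj v z with hA
  have adjK : ∀ {x y : V}, x ∈ K → y ∈ K → x ≠ y → G.Adj x y := fun hx hy hne =>
    hK (Finset.mem_coe.mpr hx) (Finset.mem_coe.mpr hy) hne
  have hMmem : ∀ {v z : V}, z ∈ M v ↔ z ∈ K ∧ ¬G.Adj v z := by
    intro v z; simp [hM]
  have hAmem : ∀ {v z : V}, z ∈ A v ↔ z ∈ K ∧ G.Adj v z := by
    intro v z; simp [hA]
  have hAcard : ∀ v, (A v).card + (M v).card = K.card := by
    intro v; exact Finset.card_filter_add_card_filter_not (fun z => G.Adj v z)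
  -- blockers
  have hcon' : ∀ x ∈ M u, ∃ v, v ∈ D ∧ G.Adj u v ∧ f v = x := by
    intro x hx
    obtain ⟨hxK, hxn⟩ := hMmem.mp hx
    obtain ⟨v, hvD, hva, hvf⟩ := hcon x hxK hxn
    exact ⟨v, hvD, hva, hvf⟩
  choose! w hwD hwAdj hwf using hcon'
  have hwK : ∀ x ∈ M u, w x ∉ K := fun x hx => hD _ (hwD x hx)
  have hwnadj : ∀ x ∈ M u, ¬G.Adj (w x) x := by
    intro x hx
    have := (hf _ (hwD x hx)).2
    rwa [hwf x hx] at this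
  have winj : ∀ x ∈ M u, ∀ y ∈ M u, w x = w y → x = y := by
    intro x hx y hy h
    rw [← hwf x hx, ← hwf y hy, h]
  have wne : ∀ x ∈ M u, ∀ y ∈ M u, x ≠ y → w x ≠ w y := by
    intro x hx y hy hne h; exact hne (winj x hx y hy h)
  have hMuK : ∀ {x}, x ∈ M u → x ∈ K := fun hx => (hMmem.mp hx).1
  have hMun : ∀ {x}, x ∈ M u → ¬G.Adj u x := fun hx => (hMmem.mp hx).2
  have huK : ∀ {x}, x ∈ K → u ≠ x := by rintro x hx rfl; exact hu hx
  have hwKx : ∀ x ∈ M u, ∀ {z}, z ∈ K → w x ≠ z := by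
    rintro x hx z hz rfl; exact hwK x hx hz
  -- fact (c): w x is adjacent to every other element of M u
  have factc : ∀ x ∈ M u, ∀ y ∈ M u, y ≠ x → G.Adj (w x) y := by
    intro x hx y hy hne
    by_contra hna
    exact no2K2 h2 (hwAdj x hx) (adjK (hMuK hx) (hMuK hy) (fun h => hne (h.symm)))
      (hMun hx) (hMun hy) (hwnadj x hx) hna
      (huK (hMuK hx)) (huK (hMuK hy)) (hwKx x hx (hMuK hx)) (hwKx x hx (hMuK hy))
  rcases le_or_gt (n + 2) ((M u).card) with hbig | hsmall
  · -- big case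
    have d1 : ∀ x ∈ M u, ∀ y ∈ M u, x ≠ y → G.Adj (w x) (w y) := by
      intro x hx y hy hne
      by_contra hna
      obtain ⟨S, hSsub, hScard⟩ := Finset.exists_subset_card_eq (s := (((M u).erase x).erase y)) (n := n)
        (by
          have h1 : x ∈ (M u) := hx
          have hcard : n ≤ (M u).card - 2 := by omega
          have : ((M u).erase x).card = (M u).card - 1 := Finset.card_erase_of_mem hx
          have hy' : y ∈ (M u).erase x := Finset.mem_erase.mpr ⟨fun h => hne (h.symm) , hy⟩
          have := Finset.card_erase_of_mem hy'
          omega)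
      have hSsub' : ∀ {s}, s ∈ S → s ∈ M u ∧ s ≠ x ∧ s ≠ y := by
        intro s hs
        have := hSsub hs
        simp only [Finset.mem_erase] at this
        exact ⟨this.2.2, this.2.1, this.1⟩
      refine noP4K hP (a := w x) (b := y) (c := x) (d := w y) (S := S)
        (factc x hx y hy (fun h => hne h.symm))
        (adjK (hMuK hy) (hMuK hx) (fun h => hne h.symm))
        ((factc y hy x hx hne).symm)
        (hwnadj x hx) hna (fun h => (hwnadj y hy) h.symm)
        (hwKx x hx (hMuK hx)) (wne x hx y hy hne) (fun h => hwK y hy (h ▸ hMuK hy))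
        hScard
        (fun s hs t ht hst => adjK (hMuK (hSsub' hs).1) (hMuK (hSsub' ht).1) hst)
        (fun s hs => factc x hx s (hSsub' hs).1 (hSsub' hs).2.1)
        (fun s hs => adjK (hMuK hy) (hMuK (hSsub' hs).1) (fun h => (hSsub' hs).2.2 h.symm))
        (fun s hs => adjK (hMuK hx) (hMuK (hSsub' hs).1) (fun h => (hSsub' hs).2.1 h.symm))
        (fun s hs => factc y hy s (hSsub' hs).1 (hSsub' hs).2.2)
    -- now build the final P4: u - w x - y - x
    obtain ⟨x, hx, y, hy, hxy⟩ := Finset.one_lt_card.mp (by omega : 1 < (M u).card)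
    obtain ⟨T, hTsub, hTcard⟩ := Finset.exists_subset_card_eq (s := (((M u).erase x).erase y)) (n := n)
      (by
        have : ((M u).erase x).card = (M u).card - 1 := Finset.card_erase_of_mem hx
        have hy' : y ∈ (M u).erase x := Finset.mem_erase.mpr ⟨fun h => hxy h.symm, hy⟩
        have := Finset.card_erase_of_mem hy'
        omega)
    have hTsub' : ∀ {s}, s ∈ T → s ∈ M u ∧ s ≠ x ∧ s ≠ y := by
      intro s hs
      have := hTsub hs
      simp only [Finset.mem_erase] at this
      exact ⟨this.2.2, this.2.1, this.1⟩
    refine noP4K hP (a := u) (b := w x) (c := y) (d := x) (S := T.image w)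
      (hwAdj x hx) (factc x hx y hy (fun h => hxy h.symm))
      (adjK (hMuK hy) (hMuK hx) (fun h => hxy h.symm))
      (hMun hy) (hMun hx) (hwnadj x hx)
      (huK (hMuK hy)) (huK (hMuK hx)) (hwKx x hx (hMuK hx))
      ?_ ?_ ?_ ?_ ?_ ?_
    · rw [Finset.card_image_of_injOn, hTcard]
      intro s hs t ht h
      exact winj s (hTsub' hs).1 t (hTsub' ht).1 h
    · rintro s hs t ht hst
      obtain ⟨zs, hzs, rfl⟩ := Finset.mem_image.mp hs
      obtain ⟨zt, hzt, rfl⟩ := Finset.mem_image.mp ht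
      exact d1 zs (hTsub' hzs).1 zt (hTsub' hzt).1 (fun h => hst (by rw [h]))
    · rintro s hs
      obtain ⟨z, hz, rfl⟩ := Finset.mem_image.mp hs
      exact hwAdj z (hTsub' hz).1
    · rintro s hs
      obtain ⟨z, hz, rfl⟩ := Finset.mem_image.mp hs
      exact d1 x hx z (hTsub' hz).1 (fun h => (hTsub' hz).2.1 h.symm)
    · rintro s hs
      obtain ⟨z, hz, rfl⟩ := Finset.mem_image.mp hs
      exact (factc z (hTsub' hz).1 y hy (fun h => (hTsub' hz).2.2 h.symm)).symm
    · rintro s hs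
      obtain ⟨z, hz, rfl⟩ := Finset.mem_image.mp hs
      exact (factc z (hTsub' hz).1 x hx (fun h => (hTsub' hz).2.1 h.symm)).symm
  · -- small case : (M u).card ≤ n + 1
    have e1 : ∀ x ∈ M u, ∀ s ∈ K, G.Adj u s → G.Adj (w x) s := by
      intro x hx s hsK hus
      by_contra hna
      have hwxM : (M (w x)).card ≤ (M u).card := hsize _ (hwD x hx)
      have hsub : A u \ A (w x) ⊆ M (w x) := by
        intro z hz
        rw [Finset.mem_sdiff] at hz
        obtain ⟨hz1, hz2⟩ := hz
        rw [hAmem] at hz1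
        rw [hMmem]
        refine ⟨hz1.1, fun h => hz2 (hAmem.mpr ⟨hz1.1, h⟩)⟩
      have hcard1 : (A u).card ≤ (A u ∩ A (w x)).card + (M u).card := by
        have := Finset.card_le_card hsub
        have h2' : (A u).card = (A u ∩ A (w x)).card + (A u \ A (w x)).card := by
          rw [Finset.card_inter_add_card_sdiff]
        omega
      have hAu : (A u).card + (M u).card = K.card := hAcard u
      have hcardn : n ≤ ((A u ∩ A (w x)).erase s).card := by
        have h1 : (A u ∩ A (w x)).card - 1 ≤ ((A u ∩ A (w x)).erase s).card :=
          Finset.pred_card_le_card_erase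
        omega
      obtain ⟨S, hSsub, hScard⟩ :=
        Finset.exists_subset_card_eq (s := ((A u ∩ A (w x)).erase s)) (n := n) (by omega)
      have hSsub' : ∀ {z}, z ∈ S → z ∈ K ∧ G.Adj u z ∧ G.Adj (w x) z ∧ z ≠ s := by
        intro z hz
        have h1 := hSsub hz
        rw [Finset.mem_erase] at h1
        obtain ⟨hne, h1⟩ := h1
        rw [Finset.mem_inter, hAmem, hAmem] at h1
        exact ⟨h1.1.1, h1.1.2, h1.2.2, hne⟩
      have hxs : x ≠ s := by rintro rfl; exact (hMun hx) hus
      refine noP4K hP (a := x) (b := s) (c := u) (d := w x) (S := S)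
        (adjK (hMuK hx) hsK hxs) hus.symm (hwAdj x hx)
        (fun h => (hMun hx) h.symm) (fun h => (hwnadj x hx) h.symm)
        (fun h => hna h.symm)
        (fun h => huK (hMuK hx) h.symm) (fun h => hwK x hx (h ▸ hMuK hx))
        (fun h => hwK x hx (h ▸ hsK))
        hScard
        (fun a ha b hb hab => adjK (hSsub' ha).1 (hSsub' hb).1 hab)
        (fun z hz => adjK (hMuK hx) (hSsub' hz).1
          (fun h => (hMun hx) (h ▸ (hSsub' hz).2.1)))
        (fun z hz => adjK hsK (hSsub' hz).1 (fun h => (hSsub' hz).2.2.2 h.symm))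
        (fun z hz => (hSsub' hz).2.1)
        (fun z hz => (hSsub' hz).2.2.1)
    have acom : ∀ x ∈ M u, ∀ z ∈ K, z ≠ x → G.Adj (w x) z := by
      intro x hx z hzK hne
      by_cases hz : G.Adj u z
      · exact e1 x hx z hzK hz
      · exact factc x hx z (hMmem.mpr ⟨hzK, hz⟩) hne
    have e2 : ∀ x ∈ M u, ∀ y ∈ M u, x ≠ y → G.Adj (w x) (w y) := by
      intro x hx y hy hne
      by_contra hna
      obtain ⟨S, hSsub, hScard⟩ := Finset.exists_subset_card_eq (s := ((K.erase x).erase y)) (n := n)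
        (by
          have hx' : x ∈ K := hMuK hx
          have hy' : y ∈ (K.erase x) := Finset.mem_erase.mpr ⟨fun h => hne h.symm, hMuK hy⟩
          have := Finset.card_erase_of_mem hx'
          have := Finset.card_erase_of_mem hy'
          omega)
      have hSsub' : ∀ {z}, z ∈ S → z ∈ K ∧ z ≠ x ∧ z ≠ y := by
        intro z hz
        have := hSsub hz
        simp only [Finset.mem_erase] at this
        exact ⟨this.2.2, this.2.1, this.1⟩
      refine noP4K hP (a := w x) (b := y) (c := x) (d := w y) (S := S)
        (factc x hx y hy (fun h => hne h.symm))
        (adjK (hMuK hy) (hMuK hx) (fun h => hne h.symm))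
        ((factc y hy x hx hne).symm)
        (hwnadj x hx) hna (fun h => (hwnadj y hy) h.symm)
        (hwKx x hx (hMuK hx)) (wne x hx y hy hne) (fun h => hwK y hy (h ▸ hMuK hy))
        hScard
        (fun a ha b hb hab => adjK (hSsub' ha).1 (hSsub' hb).1 hab)
        (fun z hz => acom x hx z (hSsub' hz).1 (hSsub' hz).2.1)
        (fun z hz => adjK (hMuK hy) (hSsub' hz).1 (fun h => (hSsub' hz).2.2 h.symm))
        (fun z hz => adjK (hMuK hx) (hSsub' hz).1 (fun h => (hSsub' hz).2.1 h.symm))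
        (fun z hz => acom y hy z (hSsub' hz).1 (hSsub' hz).2.2)
    -- final clique of size K.card + 1
    have hclique : G.IsClique ((insert u (((M u).image w) ∪ A u) : Finset V) : Set V) := by
      intro p hp q hq hpq
      simp only [Finset.coe_insert, Set.mem_insert_iff, Finset.coe_union, Set.mem_union,
        Finset.mem_coe, Finset.mem_image] at hp hq
      rcases hp with rfl | ⟨x, hx, rfl⟩ | hp
      · rcases hq with rfl | ⟨y, hy, rfl⟩ | hq
        · exact absurd rfl hpq
        · exact hwAdj y hy
        · exact (hAmem.mp hq).2
      · rcases hq with rfl | ⟨y, hy, rfl⟩ | hq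
        · exact (hwAdj x hx).symm
        · exact e2 x hx y hy (fun h => hpq (by rw [h]))
        · exact acom x hx q (hAmem.mp hq).1
            (fun h => (hMun hx) (h ▸ (hAmem.mp hq).2))
      · rcases hq with rfl | ⟨y, hy, rfl⟩ | hq
        · exact ((hAmem.mp hp).2).symm
        · exact (acom y hy p (hAmem.mp hp).1
            (fun h => (hMun hy) (h ▸ (hAmem.mp hp).2))).symm
        · exact adjK (hAmem.mp hp).1 (hAmem.mp hq).1 hpq
    have hdisj : Disjoint ((M u).image w) (A u) := by
      rw [Finset.disjoint_left]
      rintro p hp hpA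
      obtain ⟨x, hx, rfl⟩ := Finset.mem_image.mp hp
      exact hwK x hx (hAmem.mp hpA).1
    have hucard : u ∉ ((M u).image w) ∪ A u := by
      rw [Finset.mem_union]
      rintro (h | h)
      · obtain ⟨x, hx, h⟩ := Finset.mem_image.mp h
        exact huD (h ▸ hwD x hx)
      · exact hu (hAmem.mp h).1
    have hcard : (insert u (((M u).image w) ∪ A u)).card = K.card + 1 := by
      rw [Finset.card_insert_of_notMem hucard, Finset.card_union_of_disjoint hdisj,
        Finset.card_image_of_injOn (fun a ha b hb h => winj a ha b hb h)]
      have := hAcard u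
      omega
    have := hmax _ hclique
    omega
lemma greedy {n : ℕ} (hn : 1 ≤ n)
    (h2 : G.HFree twoK2) (hP : G.HFree (P4JoinK n))
    {K : Finset V} (hK : G.IsClique (K : Set V)) (hω : 3 * n + 3 ≤ K.card)
    (hmax : ∀ s : Finset V, G.IsClique (s : Set V) → s.card ≤ K.card)
    (D : Finset V) :
    (∀ v ∈ D, v ∉ K) → ∃ f : V → V, (∀ v ∈ D, f v ∈ K ∧ ¬G.Adj v (f v)) ∧
      (∀ v ∈ D, ∀ t ∈ D, G.Adj v t → f v ≠ f t) := by
  induction D using Finset.strongInduction with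
  | _ D ih =>
    intro hD
    rcases D.eq_empty_or_nonempty with rfl | hne
    · exact ⟨id, by simp, by simp⟩
    · obtain ⟨u, huD, humax⟩ :=
        D.exists_max_image (fun v => (K.filter fun z => ¬G.Adj v z).card) hne
      have hu : u ∉ K := hD u huD
      obtain ⟨f, hf1, hf2⟩ := ih (D.erase u) (Finset.erase_ssubset huD)
        (fun v hv => hD v (Finset.mem_of_mem_erase hv))
      obtain ⟨x, hxK, hxn, hxavoid⟩ := key hn h2 hP hK hω hmax hu
        (fun v hv => hD v (Finset.mem_of_mem_erase hv)) (Finset.notMem_erase u D) hf1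
        (fun v hv => humax v (Finset.mem_of_mem_erase hv))
      refine ⟨Function.update f u x, ?_, ?_⟩
      · intro v hv
        rcases eq_or_ne v u with h1 | h1
        · rw [h1, Function.update_self]; exact ⟨hxK, hxn⟩
        · rw [Function.update_of_ne h1]
          exact hf1 v (Finset.mem_erase.mpr ⟨h1, hv⟩)
      · intro v hv t ht hadj
        rcases eq_or_ne v u with h1 | h1 <;> rcases eq_or_ne t u with h2 | h2
        · rw [h1, h2] at hadj; exact absurd hadj (G.loopless.irrefl _)
        · rw [h1] at hadj ⊢
          rw [Function.update_self, Function.update_of_ne h2]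
          exact fun h => hxavoid t (Finset.mem_erase.mpr ⟨h2, ht⟩) hadj h.symm
        · rw [h2] at hadj ⊢
          rw [Function.update_of_ne h1, Function.update_self]
          exact hxavoid v (Finset.mem_erase.mpr ⟨h1, hv⟩) hadj.symm
        · rw [Function.update_of_ne h1, Function.update_of_ne h2]
          exact hf2 v (Finset.mem_erase.mpr ⟨h1, hv⟩) t (Finset.mem_erase.mpr ⟨h2, ht⟩) hadj
end Key

/-- For every positive integer `n`, the family of `(2K₂, P₄ ∨ Kₙ)`-free finite simple
graphs is near optimal colourable. -/
theorem stmt8 (n : ℕ) (hn : 1 ≤ n) :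
    ∃ c : ℕ, ∀ (V : Type) [Fintype V], ∀ G : SimpleGraph V,
      G.HFree twoK2 → G.HFree (P4JoinK n) →
      G.chromaticNumber ≤ ↑(max c G.cliqueNum) := by
  refine ⟨(3 * n + 2) + (3 * n + 2) * (3 * n + 2), ?_⟩
  intro V _ G h2 hP
  classical
  obtain ⟨K, hKN⟩ := G.exists_isNClique_cliqueNum
  have hKc : G.IsClique (K : Set V) := hKN.isClique
  have hKcard : K.card = G.cliqueNum := hKN.card_eq
  have hmax : ∀ s : Finset V, G.IsClique (s : Set V) → s.card ≤ K.card := by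
    intro s hs; rw [hKcard]; exact hs.card_le_cliqueNum
  have adjK : ∀ {x y : V}, x ∈ K → y ∈ K → x ≠ y → G.Adj x y := fun hx hy hne =>
    hKc (Finset.mem_coe.mpr hx) (Finset.mem_coe.mpr hy) hne
  have hMne : ∀ v, v ∉ K → ∃ z, z ∈ K ∧ ¬G.Adj v z := by
    intro v hv
    by_contra h
    push_neg at h
    have hcl : G.IsClique ((insert v K : Finset V) : Set V) := by
      rw [Finset.coe_insert]
      exact hKc.insert (fun b hb _ => h b hb)
    have := hmax _ hcl
    rw [Finset.card_insert_of_notMem hv] at this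
    omega
  rcases le_or_gt K.card (3 * n + 2) with hsm | hbg
  · -- small clique number: bounded coloring
    set M : V → Finset V := fun v => K.filter fun z => ¬G.Adj v z with hM
    choose! x hx1 hx2 using hMne
    have hxM : ∀ v, v ∉ K → x v ∈ M v := by
      intro v hv; rw [hM]; exact Finset.mem_filter.mpr ⟨hx1 v hv, hx2 v hv⟩
    have hyex : ∀ v, v ∉ K → 2 ≤ (M v).card → ∃ z, (z ∈ K ∧ ¬G.Adj v z) ∧ z ≠ x v := by
      intro v hv hc
      obtain ⟨b, hb, hbne⟩ := Finset.exists_mem_ne (s := M v) (by omega) (x v)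
      rw [hM] at hb
      rw [Finset.mem_filter] at hb
      exact ⟨b, ⟨hb.1, hb.2⟩, hbne⟩
    choose! y hy1 hy2 using hyex
    have col : G.Coloring (↥K ⊕ ↥K × ↥K) := by
      refine Coloring.mk (fun v =>
        if h : v ∈ K then Sum.inl ⟨v, h⟩
        else if h2c : 2 ≤ (M v).card then
          Sum.inr (⟨x v, hx1 v h⟩, ⟨y v, (hy1 v h h2c).1⟩)
        else Sum.inl ⟨x v, hx1 v h⟩) ?_
      intro a b hadj
      have hne := hadj.ne
      by_cases haK : a ∈ K <;> by_cases hbK : b ∈ K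
      · simp only [dif_pos haK, dif_pos hbK, ne_eq, Sum.inl.injEq, Subtype.mk.injEq]
        exact hne
      · simp only [dif_pos haK, dif_neg hbK]
        split_ifs with h2b
        · simp
        · simp only [ne_eq, Sum.inl.injEq, Subtype.mk.injEq]
          intro h
          exact hx2 b hbK (h ▸ hadj.symm)
      · simp only [dif_neg haK, dif_pos hbK]
        split_ifs with h2a
        · simp
        · simp only [ne_eq, Sum.inl.injEq, Subtype.mk.injEq]
          intro h
          exact hx2 a haK (h ▸ hadj)
      · simp only [dif_neg haK, dif_neg hbK]
        split_ifs with h2a h2b h2b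
        · -- both get pairs
          simp only [ne_eq, Sum.inr.injEq, Prod.mk.injEq, Subtype.mk.injEq, not_and]
          intro hxx hyy
          have hyK := (hy1 a haK h2a).1
          have hyn := (hy1 a haK h2a).2
          refine no2K2 h2 (a := a) (b := b) (c := x a) (d := y a) hadj
            (adjK (hx1 a haK) hyK (fun h => (hy2 a haK h2a) h.symm))
            (hx2 a haK) hyn (hxx ▸ hx2 b hbK) (hyy ▸ (hy1 b hbK h2b).2)
            ?_ ?_ ?_ ?_
          · intro h; apply haK; rw [h]; exact hx1 a haK
          · intro h; apply haK; rw [h]; exact hyK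
          · intro h; apply hbK; rw [h]; exact hx1 a haK
          · intro h; apply hbK; rw [h]; exact hyK
        · simp
        · simp
        · -- both singletons
          simp only [ne_eq, Sum.inl.injEq, Subtype.mk.injEq]
          intro h
          have hMa : (M a).card ≤ 1 := by omega
          have hMb : (M b).card ≤ 1 := by omega
          have hext : ∀ {v}, v ∉ K → (M v).card ≤ 1 → ∀ z ∈ K, z ≠ x v → G.Adj v z := by
            intro v hv h1 z hz hzne
            by_contra hna
            have hzM : z ∈ M v := Finset.mem_filter.mpr ⟨hz, hna⟩
            exact hzne (Finset.card_le_one.mp h1 _ hzM _ (hxM v hv))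
          have hclq : G.IsClique ((insert a (insert b (K.erase (x a))) : Finset V) : Set V) := by
            intro p hp q hq hpq
            simp only [Finset.coe_insert, Set.mem_insert_iff, Finset.mem_coe,
              Finset.mem_erase] at hp hq
            rcases hp with rfl | rfl | ⟨hp1, hp2⟩
            · rcases hq with rfl | rfl | ⟨hq1, hq2⟩
              · exact absurd rfl hpq
              · exact hadj
              · exact hext haK hMa q hq2 hq1
            · rcases hq with rfl | rfl | ⟨hq1, hq2⟩
              · exact hadj.symm
              · exact absurd rfl hpq
              · exact hext hbK hMb q hq2 (h ▸ hq1)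
            · rcases hq with rfl | rfl | ⟨hq1, hq2⟩
              · exact (hext haK hMa p hp2 hp1).symm
              · exact (hext hbK hMb p hp2 (h ▸ hp1)).symm
              · exact adjK hp2 hq2 hpq
          have hbnot : b ∉ K.erase (x a) := fun hb => hbK (Finset.mem_of_mem_erase hb)
          have hanot : a ∉ insert b (K.erase (x a)) := by
            rw [Finset.mem_insert]
            rintro (rfl | ha)
            · exact hne rfl
            · exact haK (Finset.mem_of_mem_erase ha)
          have hcard := hmax _ hclq
          rw [Finset.card_insert_of_notMem hanot, Finset.card_insert_of_notMem hbnot,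
            Finset.card_erase_of_mem (hx1 a haK)] at hcard
          have hKpos : 1 ≤ K.card := Finset.card_pos.mpr ⟨x a, hx1 a haK⟩
          omega
    have hcol := col.colorable
    have hcardeq : Fintype.card (↥K ⊕ ↥K × ↥K) = K.card + K.card * K.card := by
      simp [Fintype.card_sum, Fintype.card_prod, Fintype.card_coe]
    rw [hcardeq] at hcol
    have hle : K.card + K.card * K.card ≤ max ((3 * n + 2) + (3 * n + 2) * (3 * n + 2)) G.cliqueNum := by
      have := le_max_left ((3 * n + 2) + (3 * n + 2) * (3 * n + 2)) G.cliqueNum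
      nlinarith
    exact (hcol.mono hle).chromaticNumber_le
  · -- large clique number
    have hω : 3 * n + 3 ≤ K.card := hbg
    obtain ⟨f, hf1, hf2⟩ := greedy hn h2 hP hKc hω hmax (Finset.univ.filter (· ∉ K))
      (fun v hv => (Finset.mem_filter.mp hv).2)
    have hmemf : ∀ v, v ∉ K → v ∈ Finset.univ.filter (· ∉ K) := by
      intro v hv; exact Finset.mem_filter.mpr ⟨Finset.mem_univ v, hv⟩
    have col : G.Coloring ↥K := by
      refine Coloring.mk (fun v =>
        if h : v ∈ K then ⟨v, h⟩ else ⟨f v, (hf1 v (hmemf v h)).1⟩) ?_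
      intro a b hadj
      have hne := hadj.ne
      by_cases haK : a ∈ K <;> by_cases hbK : b ∈ K
      · simp only [dif_pos haK, dif_pos hbK, ne_eq, Subtype.mk.injEq]
        exact hne
      · simp only [dif_pos haK, dif_neg hbK, ne_eq, Subtype.mk.injEq]
        intro h
        exact (hf1 b (hmemf b hbK)).2 (h ▸ hadj.symm)
      · simp only [dif_neg haK, dif_pos hbK, ne_eq, Subtype.mk.injEq]
        intro h
        exact (hf1 a (hmemf a haK)).2 (h ▸ hadj)
      · simp only [dif_neg haK, dif_neg hbK, ne_eq, Subtype.mk.injEq]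
        exact hf2 a (hmemf a haK) b (hmemf b hbK) hadj
    have hcol := col.colorable
    rw [Fintype.card_coe, hKcard] at hcol
    exact (hcol.mono (le_max_right _ _)).chromaticNumber_le
end

section
/- For every positive integer n there exists a constant g such that every (2K₂, P₄ ∨ Kₙ)-free graph G that contains no induced subgraph isomorphic to the complement of a cycle C_r for any r ≥ 6, and that satisfies ω(G) ≥ g, has χ(G) = ω(G). -/
open SimpleGraph

namespace Stmt10Aux

open Finset

variable {V : Type} {G : SimpleGraph V}

/-- If `G` contains two disjoint edges with no edges between them, it is not `2K₂`-free. -/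
lemma not_twoK2_free {u v k k' : V}
    (huv : G.Adj u v) (hkk' : G.Adj k k')
    (h1 : ¬ G.Adj u k) (h2 : ¬ G.Adj u k') (h3 : ¬ G.Adj v k) (h4 : ¬ G.Adj v k')
    (d1 : u ≠ k) (d2 : u ≠ k') (d3 : v ≠ k) (d4 : v ≠ k') :
    ¬ G.HFree twoK2 := by
  intro hfree
  apply hfree
  refine ⟨⟨⟨Sum.elim ![u, v] ![k, k'], ?_⟩, ?_⟩⟩
  · rintro (i | i) (j | j) hij <;>
      fin_cases i <;> fin_cases j <;>
      simp_all [huv.ne, hkk'.ne]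
  · show ∀ {a b}, G.Adj (Sum.elim ![u, v] ![k, k'] a) (Sum.elim ![u, v] ![k, k'] b) ↔ twoK2.Adj a b
    have h1' : ¬ G.Adj k u := fun h => h1 h.symm
    have h2' : ¬ G.Adj k' u := fun h => h2 h.symm
    have h3' : ¬ G.Adj k v := fun h => h3 h.symm
    have h4' : ¬ G.Adj k' v := fun h => h4 h.symm
    rintro (i | i) (j | j) <;>
      fin_cases i <;> fin_cases j <;>
      simp [twoK2, huv, huv.symm, hkk', hkk'.symm, h1, h2, h3, h4,
        h1', h2', h3', h4', G.irrefl]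

/-- If `G` contains an induced `P₄` (on `a-b-c-d`) together with `n` vertices forming a
clique, distinct from and complete to the `P₄`, then `G` is not `(P₄ ∨ Kₙ)`-free. -/
lemma not_P4JoinK_free {n : ℕ} {a b c d : V} {W : Finset V}
    (hWcard : n ≤ W.card) (hWcl : G.IsClique W)
    (hab : G.Adj a b) (hbc : G.Adj b c) (hcd : G.Adj c d)
    (hac : ¬ G.Adj a c) (had : ¬ G.Adj a d) (hbd : ¬ G.Adj b d)
    (dac : a ≠ c) (dad : a ≠ d) (dbd : b ≠ d)
    (hW : ∀ w ∈ W, G.Adj w a ∧ G.Adj w b ∧ G.Adj w c ∧ G.Adj w d ∧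
      w ≠ a ∧ w ≠ b ∧ w ≠ c ∧ w ≠ d) :
    ¬ G.HFree (P4JoinK n) := by
  intro hfree
  apply hfree
  obtain ⟨W', hW'sub, hW'card⟩ := W.exists_subset_card_eq hWcard
  have hcard : Fintype.card ↥(W' : Finset V) = n := by
    rw [Fintype.card_coe, hW'card]
  let e : ↥(W' : Finset V) ≃ Fin n := Fintype.equivFinOfCardEq hcard
  let w : Fin n → V := fun i => ((e.symm i : ↥(W' : Finset V)) : V)
  have hwinj : Function.Injective w := by
    intro i j hij
    have := Subtype.coe_injective hij
    exact e.symm.injective this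
  have hwmem : ∀ i, w i ∈ W := fun i => hW'sub (e.symm i).2
  have hwprop : ∀ i, G.Adj (w i) a ∧ G.Adj (w i) b ∧ G.Adj (w i) c ∧ G.Adj (w i) d ∧
      w i ≠ a ∧ w i ≠ b ∧ w i ≠ c ∧ w i ≠ d := fun i => hW _ (hwmem i)
  have mdist : a ≠ b ∧ b ≠ c ∧ c ≠ d := ⟨hab.ne, hbc.ne, hcd.ne⟩
  refine ⟨⟨Sum.elim ![a, b, c, d] w, ?_⟩, ?_⟩
  · rintro (i | i) (j | j) hij
    · have : (![a, b, c, d] : Fin 4 → V) i = ![a, b, c, d] j := hij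
      fin_cases i <;> fin_cases j <;>
        simp_all [hab.ne, hbc.ne, hcd.ne]
    · exfalso
      have h2 := hwprop j
      fin_cases i
      · have h1 : a = w j := by simpa using hij
        exact h2.2.2.2.2.1 h1.symm
      · have h1 : b = w j := by simpa using hij
        exact h2.2.2.2.2.2.1 h1.symm
      · have h1 : c = w j := by simpa using hij
        exact h2.2.2.2.2.2.2.1 h1.symm
      · have h1 : d = w j := by simpa using hij
        exact h2.2.2.2.2.2.2.2 h1.symm
    · exfalso
      have h2 := hwprop i
      fin_cases j
      · have h1 : w i = a := by simpa using hij
        exact h2.2.2.2.2.1 h1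
      · have h1 : w i = b := by simpa using hij
        exact h2.2.2.2.2.2.1 h1
      · have h1 : w i = c := by simpa using hij
        exact h2.2.2.2.2.2.2.1 h1
      · have h1 : w i = d := by simpa using hij
        exact h2.2.2.2.2.2.2.2 h1
    · have : w i = w j := hij
      rw [hwinj this]
  · show ∀ {x y}, G.Adj (Sum.elim ![a, b, c, d] w x) (Sum.elim ![a, b, c, d] w y) ↔ (P4JoinK n).Adj x y
    rintro (i | i) (j | j)
    · show G.Adj _ _ ↔ (pathGraph 4).Adj i j
      have hac' : ¬ G.Adj c a := fun h => hac h.symm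
      have had' : ¬ G.Adj d a := fun h => had h.symm
      have hbd' : ¬ G.Adj d b := fun h => hbd h.symm
      fin_cases i <;> fin_cases j <;>
        rw [pathGraph_adj] <;>
        simp [hab, hbc, hcd, hab.symm, hbc.symm, hcd.symm, hac, had, hbd,
          hac', had', hbd', G.irrefl]
    · show G.Adj _ (w j) ↔ True
      have h2 := hwprop j
      fin_cases i <;> simp [(h2.1).symm, (h2.2.1).symm, (h2.2.2.1).symm, (h2.2.2.2.1).symm]
    · show G.Adj (w i) _ ↔ True
      have h2 := hwprop i
      fin_cases j <;> simp [h2.1, h2.2.1, h2.2.2.1, h2.2.2.2.1]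
    · show G.Adj (w i) (w j) ↔ i ≠ j
      constructor
      · intro h hij
        exact G.irrefl (hij ▸ h)
      · intro hij
        exact hWcl (hwmem i) (hwmem j) (fun h => hij (hwinj h))


section Core

variable [DecidableEq V] {n : ℕ} {K : Finset V}

open scoped Classical in
/-- The set of non-neighbours of `v` inside `K`. -/
noncomputable def MM (G : SimpleGraph V) (K : Finset V) (v : V) : Finset V :=
  K.filter (fun k => ¬ G.Adj v k)

lemma mem_MM {v k : V} : k ∈ MM G K v ↔ k ∈ K ∧ ¬ G.Adj v k := by
  simp [MM]

lemma MM_subset {v : V} : MM G K v ⊆ K := fun _ hk => (mem_MM.1 hk).1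

lemma adj_of_not_mem_MM {v k : V} (hk : k ∈ K) (h : k ∉ MM G K v) : G.Adj v k := by
  by_contra h'
  exact h (mem_MM.2 ⟨hk, h'⟩)

/-- Two adjacent vertices outside `K` miss at most one common vertex of `K`. -/
lemma shared_unique (h2 : G.HFree twoK2) (hcl : G.IsClique (K : Set V))
    {u v : V} (hu : u ∉ K) (hv : v ∉ K) (huv : G.Adj u v)
    {k k' : V} (hku : k ∈ MM G K u) (hkv : k ∈ MM G K v)
    (hk'u : k' ∈ MM G K u) (hk'v : k' ∈ MM G K v) : k = k' := by
  by_contra hne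
  have hkK : k ∈ K := (mem_MM.1 hku).1
  have hk'K : k' ∈ K := (mem_MM.1 hk'u).1
  have hkk' : G.Adj k k' := hcl (Finset.mem_coe.2 hkK) (Finset.mem_coe.2 hk'K) hne
  exact not_twoK2_free huv hkk' (mem_MM.1 hku).2 (mem_MM.1 hk'u).2
    (mem_MM.1 hkv).2 (mem_MM.1 hk'v).2
    (fun h => hu (h ▸ hkK)) (fun h => hu (h ▸ hk'K))
    (fun h => hv (h ▸ hkK)) (fun h => hv (h ▸ hk'K)) h2

/-- Key lemma: an adjacent pair outside `K` sharing a missed vertex, where `v` misses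
something that `u` sees, forces almost all of `K` to be missed by `u` or `v`. -/
lemma adj_pair_union_large (h4 : G.HFree (P4JoinK n)) (hcl : G.IsClique (K : Set V))
    {u v : V} (hu : u ∉ K) (hv : v ∉ K) (huv : G.Adj u v)
    {k₁ k₂ : V} (h1u : k₁ ∈ MM G K u) (h1v : k₁ ∈ MM G K v)
    (h2v : k₂ ∈ MM G K v) (h2u : k₂ ∉ MM G K u) :
    (K \ (MM G K u ∪ MM G K v)).card < n := by
  by_contra hge
  push_neg at hge
  have hk₁K : k₁ ∈ K := (mem_MM.1 h1u).1
  have hk₂K : k₂ ∈ K := (mem_MM.1 h2v).1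
  have hne12 : k₂ ≠ k₁ := fun h => h2u (h ▸ h1u)
  have hWsub : K \ (MM G K u ∪ MM G K v) ⊆ K := Finset.sdiff_subset
  refine not_P4JoinK_free (W := K \ (MM G K u ∪ MM G K v)) hge
    (hcl.subset (Finset.coe_subset.2 hWsub))
    (huv.symm) (adj_of_not_mem_MM hk₂K h2u) (hcl (Finset.mem_coe.2 hk₂K)
      (Finset.mem_coe.2 hk₁K) hne12)
    (mem_MM.1 h2v).2 (mem_MM.1 h1v).2 (mem_MM.1 h1u).2
    (fun h => hv (h ▸ hk₂K)) (fun h => hv (h ▸ hk₁K)) (fun h => hu (h ▸ hk₁K))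
    ?_ h4
  intro w hw
  rw [Finset.mem_sdiff, Finset.mem_union] at hw
  obtain ⟨hwK, hwn⟩ := hw
  push_neg at hwn
  obtain ⟨hwu, hwv⟩ := hwn
  have hwne₂ : w ≠ k₂ := fun h => hwv (h ▸ h2v)
  have hwne₁ : w ≠ k₁ := fun h => hwu (h ▸ h1u)
  exact ⟨(adj_of_not_mem_MM hwK hwv).symm, (adj_of_not_mem_MM hwK hwu).symm,
    hcl (Finset.mem_coe.2 hwK) (Finset.mem_coe.2 hk₂K) hwne₂,
    hcl (Finset.mem_coe.2 hwK) (Finset.mem_coe.2 hk₁K) hwne₁,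
    fun h => hv (h ▸ hwK), fun h => hu (h ▸ hwK), hwne₂, hwne₁⟩

/-- Key lemma for nonadjacent pairs outside `K` with crossing misses. -/
lemma nonadj_pair_union_large (h4 : G.HFree (P4JoinK n)) (hcl : G.IsClique (K : Set V))
    {u u' : V} (hu : u ∉ K) (hu' : u' ∉ K) (hne : u ≠ u') (hnadj : ¬ G.Adj u u')
    {x y : V} (hxu : x ∈ MM G K u) (hxadj : G.Adj u' x)
    (hyu' : y ∈ MM G K u') (hyadj : G.Adj u y) :
    (K \ (MM G K u ∪ MM G K u')).card < n := by
  by_contra hge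
  push_neg at hge
  have hxK : x ∈ K := (mem_MM.1 hxu).1
  have hyK : y ∈ K := (mem_MM.1 hyu').1
  have hxy : x ≠ y := by
    intro h
    exact (mem_MM.1 hyu').2 (h ▸ hxadj)
  have hWsub : K \ (MM G K u ∪ MM G K u') ⊆ K := Finset.sdiff_subset
  refine not_P4JoinK_free (W := K \ (MM G K u ∪ MM G K u')) hge
    (hcl.subset (Finset.coe_subset.2 hWsub))
    hxadj (hcl (Finset.mem_coe.2 hxK) (Finset.mem_coe.2 hyK) hxy) hyadj.symm
    (mem_MM.1 hyu').2 (fun h => hnadj h.symm) (fun h => (mem_MM.1 hxu).2 h.symm)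
    (fun h => hu' (h ▸ hyK)) hne.symm (fun h => hu (h ▸ hxK))
    ?_ h4
  intro w hw
  rw [Finset.mem_sdiff, Finset.mem_union] at hw
  obtain ⟨hwK, hwn⟩ := hw
  push_neg at hwn
  obtain ⟨hwu, hwu'⟩ := hwn
  have hwnex : w ≠ x := fun h => hwu (h ▸ hxu)
  have hwney : w ≠ y := fun h => hwu' (h ▸ hyu')
  exact ⟨(adj_of_not_mem_MM hwK hwu').symm,
    hcl (Finset.mem_coe.2 hwK) (Finset.mem_coe.2 hxK) hwnex,
    hcl (Finset.mem_coe.2 hwK) (Finset.mem_coe.2 hyK) hwney,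
    (adj_of_not_mem_MM hwK hwu).symm,
    fun h => hu' (h ▸ hwK), hwnex, hwney, fun h => hu (h ▸ hwK)⟩

open scoped Classical in
/-- The set of possibly conflicting colours for `v`: missed vertices of `K` that are
also missed by some neighbour of `v` outside `K`. -/
noncomputable def RR (G : SimpleGraph V) (K : Finset V) (v : V) : Finset V :=
  (MM G K v).filter (fun k => ∃ u, u ∉ K ∧ G.Adj v u ∧ k ∈ MM G K u)

lemma mem_RR {v k : V} : k ∈ RR G K v ↔
    k ∈ MM G K v ∧ ∃ u, u ∉ K ∧ G.Adj v u ∧ k ∈ MM G K u := by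
  simp [RR]

lemma RR_subset {v : V} : RR G K v ⊆ MM G K v := fun _ hk => (mem_RR.1 hk).1

/-- Root bound: a vertex missing many vertices of `K` has few conflicting colours. -/
lemma RR_card_le (h2 : G.HFree twoK2) (h4 : G.HFree (P4JoinK n))
    (hcl : G.IsClique (K : Set V)) {v : V} (hv : v ∉ K)
    (hbig : n + 2 ≤ (MM G K v).card) : (RR G K v).card ≤ n + 1 := by
  by_contra hcon
  push_neg at hcon
  have hRMv : ∀ k ∈ RR G K v, k ∈ MM G K v := fun k hk => RR_subset hk
  have hwitex : ∀ k ∈ RR G K v, ∃ u, u ∉ K ∧ G.Adj v u ∧ k ∈ MM G K u :=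
    fun k hk => (mem_RR.1 hk).2
  choose! wit hw1 hw2 hw3 using hwitex
  -- distinct roots have distinct witnesses
  have hinj : ∀ k ∈ RR G K v, ∀ k' ∈ RR G K v, wit k = wit k' → k = k' := by
    intro k hk k' hk' he
    refine shared_unique h2 hcl (hw1 k hk) hv (hw2 k hk).symm
      (hw3 k hk) (hRMv k hk) ?_ (hRMv k' hk')
    rw [he]
    exact hw3 k' hk'
  -- a missed vertex of another witness must be the root
  have hroot : ∀ k ∈ RR G K v, ∀ x, x ∈ MM G K (wit k) → x ∈ MM G K v → x = k := by
    intro k hk x hx hxv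
    exact shared_unique h2 hcl (hw1 k hk) hv (hw2 k hk).symm hx hxv (hw3 k hk) (hRMv k hk)
  -- witnesses of distinct roots are adjacent
  have hadjw : ∀ k ∈ RR G K v, ∀ k' ∈ RR G K v, k ≠ k' → G.Adj (wit k) (wit k') := by
    intro k hk k' hk' hnekk
    by_contra hnadj
    have hne' : wit k ≠ wit k' := fun h => hnekk (hinj k hk k' hk' h)
    have hkn : k ∉ MM G K (wit k') := fun hmem => hnekk (hroot k' hk' k hmem (hRMv k hk))
    have hk'n : k' ∉ MM G K (wit k) := fun hmem =>
      hnekk (hroot k hk k' hmem (hRMv k' hk')).symm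
    have hadj1 : G.Adj (wit k') k := adj_of_not_mem_MM (mem_MM.1 (hRMv k hk)).1 hkn
    have hadj2 : G.Adj (wit k) k' := adj_of_not_mem_MM (mem_MM.1 (hRMv k' hk')).1 hk'n
    have hlt := nonadj_pair_union_large h4 hcl (hw1 k hk) (hw1 k' hk') hne' hnadj
      (hw3 k hk) hadj1 (hw3 k' hk') hadj2
    -- counting contradiction
    set A := MM G K v with hA
    set B := MM G K (wit k) ∪ MM G K (wit k') with hB
    have hBK : B ⊆ K := Finset.union_subset MM_subset MM_subset
    have hsd : (K \ B).card = K.card - B.card := Finset.card_sdiff_of_subset hBK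
    have hABsub : A ∩ B ⊆ {k, k'} := by
      intro x hx
      rcases Finset.mem_inter.1 hx with ⟨hxA, hxB⟩
      rcases Finset.mem_union.1 hxB with h | h
      · exact Finset.mem_insert.2 (Or.inl (hroot k hk x h hxA))
      · have := hroot k' hk' x h hxA
        simp [this]
    have hABcard : (A ∩ B).card ≤ 2 := by
      refine (Finset.card_le_card hABsub).trans ?_
      exact (Finset.card_insert_le _ _).trans (by simp)
    have hunion := Finset.card_union_add_card_inter A B
    have h1 : (A ∪ B).card ≤ K.card := Finset.card_le_card (Finset.union_subset MM_subset hBK)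
    have h2' : B.card ≤ K.card := Finset.card_le_card hBK
    omega
  -- extract n+2 distinct roots
  obtain ⟨R', hsub, hcardR⟩ := (RR G K v).exists_subset_card_eq (n := n + 2) (by omega)
  have h1lt : 1 < R'.card := by omega
  obtain ⟨k₀, hk₀, k₁, hk₁, hk01⟩ := Finset.one_lt_card.1 h1lt
  have hk₀R : k₀ ∈ RR G K v := hsub hk₀
  have hk₁R : k₁ ∈ RR G K v := hsub hk₁
  -- the big clique
  set W : Finset V := (R' \ {k₀, k₁}).image wit with hW
  have hmemprop : ∀ k ∈ R' \ ({k₀, k₁} : Finset V),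
      k ∈ RR G K v ∧ k ≠ k₀ ∧ k ≠ k₁ := by
    intro k hk
    rw [Finset.mem_sdiff] at hk
    exact ⟨hsub hk.1, fun h => hk.2 (by simp [h]), fun h => hk.2 (by simp [h])⟩
  have hWcard : W.card = n := by
    have hinjOn : Set.InjOn wit ↑(R' \ ({k₀, k₁} : Finset V)) := by
      intro a ha b hb hab
      exact hinj a (hmemprop a ha).1 b (hmemprop b hb).1 hab
    have h2sub : ({k₀, k₁} : Finset V) ⊆ R' := by
      intro x hx
      rcases Finset.mem_insert.1 hx with h | h
      · exact h ▸ hk₀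
      · exact (Finset.mem_singleton.1 h) ▸ hk₁
    rw [hW, Finset.card_image_of_injOn hinjOn, Finset.card_sdiff_of_subset h2sub,
      Finset.card_pair hk01, hcardR]
    omega
  have hWclique : G.IsClique (W : Set V) := by
    intro x hx y hy hxy
    obtain ⟨kx, hkx, rfl⟩ := Finset.mem_image.1 (Finset.mem_coe.1 hx)
    obtain ⟨ky, hky, rfl⟩ := Finset.mem_image.1 (Finset.mem_coe.1 hy)
    have hkxy : kx ≠ ky := fun h => hxy (h ▸ rfl)
    exact hadjw kx (hmemprop kx hkx).1 ky (hmemprop ky hky).1 hkxy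
  -- build the forbidden structure
  have hk₁K : k₁ ∈ K := (mem_MM.1 (hRMv k₁ hk₁R)).1
  have hk₀K : k₀ ∈ K := (mem_MM.1 (hRMv k₀ hk₀R)).1
  have hk₁wit : k₁ ∉ MM G K (wit k₀) := fun h => hk01 (hroot k₀ hk₀R k₁ h (hRMv k₁ hk₁R)).symm
  refine not_P4JoinK_free (W := W) hWcard.ge hWclique
    (hw2 k₀ hk₀R) (adj_of_not_mem_MM hk₁K hk₁wit)
    (hcl (Finset.mem_coe.2 hk₁K) (Finset.mem_coe.2 hk₀K) hk01.symm)
    (mem_MM.1 (hRMv k₁ hk₁R)).2 (mem_MM.1 (hRMv k₀ hk₀R)).2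
    (mem_MM.1 (hw3 k₀ hk₀R)).2
    (fun h => hv (h ▸ hk₁K)) (fun h => hv (h ▸ hk₀K))
    (fun h => hw1 k₀ hk₀R (by rw [h]; exact hk₀K)) ?_ h4
  intro w hw
  obtain ⟨k, hkmem, rfl⟩ := Finset.mem_image.1 hw
  obtain ⟨hkR, hkne₀, hkne₁⟩ := hmemprop k hkmem
  have ha1 : G.Adj (wit k) v := (hw2 k hkR).symm
  have ha2 : G.Adj (wit k) (wit k₀) := hadjw k hkR k₀ hk₀R hkne₀
  have hk₁notin : k₁ ∉ MM G K (wit k) := fun h => hkne₁ (hroot k hkR k₁ h (hRMv k₁ hk₁R)).symm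
  have hk₀notin : k₀ ∉ MM G K (wit k) := fun h => hkne₀ (hroot k hkR k₀ h (hRMv k₀ hk₀R)).symm
  exact ⟨ha1, ha2, adj_of_not_mem_MM hk₁K hk₁notin, adj_of_not_mem_MM hk₀K hk₀notin,
    ha1.ne, fun h => hkne₀ (hinj k hkR k₀ hk₀R h),
    fun h => hw1 k hkR (by rw [h]; exact hk₁K), fun h => hw1 k hkR (by rw [h]; exact hk₀K)⟩

/-- In a conflict pair, at least one side misses many vertices of `K`. -/
lemma conflict_big (h2 : G.HFree twoK2) (h4 : G.HFree (P4JoinK n))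
    (hcl : G.IsClique (K : Set V))
    (hmax : ∀ s : Finset V, G.IsClique (s : Set V) → s.card ≤ K.card)
    (hbigK : 3 * n + 4 ≤ K.card)
    {u v k : V} (hu : u ∉ K) (hv : v ∉ K) (huv : G.Adj u v)
    (hku : k ∈ MM G K u) (hkv : k ∈ MM G K v) :
    n + 2 ≤ (MM G K u).card ∨ n + 2 ≤ (MM G K v).card := by
  by_contra hcon
  push_neg at hcon
  obtain ⟨hsu, hsv⟩ := hcon
  have hcount : ∀ u' v' : V, (MM G K u').card < n + 2 → (MM G K v').card < n + 2 →
      ¬ ((K \ (MM G K u' ∪ MM G K v')).card < n) := by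
    intro u' v' h1 h2' hlt
    have hsub : MM G K u' ∪ MM G K v' ⊆ K := Finset.union_subset MM_subset MM_subset
    have hsd : (K \ (MM G K u' ∪ MM G K v')).card
        = K.card - (MM G K u' ∪ MM G K v').card := Finset.card_sdiff_of_subset hsub
    have hun : (MM G K u' ∪ MM G K v').card ≤ (MM G K u').card + (MM G K v').card :=
      Finset.card_union_le _ _
    have := Finset.card_le_card hsub
    omega
  by_cases hex : ∃ k₂ ∈ MM G K v, k₂ ∉ MM G K u
  · obtain ⟨k₂, h2v, h2u⟩ := hex
    exact hcount u v hsu hsv (adj_pair_union_large h4 hcl hu hv huv hku hkv h2v h2u)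
  · by_cases hex' : ∃ k₂ ∈ MM G K u, k₂ ∉ MM G K v
    · obtain ⟨k₂, h2u, h2v⟩ := hex'
      exact hcount v u hsv hsu (adj_pair_union_large h4 hcl hv hu huv.symm hkv hku h2u h2v)
    · push_neg at hex hex'
      -- MM u = MM v
      by_cases hex2 : ∃ k' ∈ MM G K u, k' ≠ k
      · obtain ⟨k', hk'u, hk'k⟩ := hex2
        exact hk'k (shared_unique h2 hcl hu hv huv hk'u (hex' k' hk'u) hku hkv)
      · push_neg at hex2
        -- MM u = {k}; build a bigger clique
        have hkK : k ∈ K := (mem_MM.1 hku).1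
        have hclE : G.IsClique ((K.erase k : Finset V) : Set V) :=
          hcl.subset (Finset.coe_subset.2 (Finset.erase_subset _ _))
        have hadjv : ∀ b ∈ K.erase k, v ≠ b → G.Adj v b := by
          intro b hb _
          have hbK := Finset.mem_of_mem_erase hb
          have hbk := Finset.ne_of_mem_erase hb
          by_contra hnadj
          have hbMv : b ∈ MM G K v := mem_MM.2 ⟨hbK, hnadj⟩
          have hbMu : b ∈ MM G K u := hex b hbMv
          exact hbk (hex2 b hbMu)
        have hadju : ∀ b ∈ insert v (K.erase k), u ≠ b → G.Adj u b := by
          intro b hb _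
          rcases Finset.mem_insert.1 hb with rfl | hb'
          · exact huv
          · have hbK := Finset.mem_of_mem_erase hb'
            have hbk := Finset.ne_of_mem_erase hb'
            by_contra hnadj
            have hbMu : b ∈ MM G K u := mem_MM.2 ⟨hbK, hnadj⟩
            exact hbk (hex2 b hbMu)
        have hcl1 : G.IsClique ((insert v (K.erase k) : Finset V) : Set V) := by
          rw [Finset.coe_insert]
          exact hclE.insert fun b hb hne => hadjv b hb hne
        have hcl2 : G.IsClique ((insert u (insert v (K.erase k)) : Finset V) : Set V) := by
          rw [Finset.coe_insert]
          exact hcl1.insert fun b hb hne => hadju b hb hne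
        have hvnot : v ∉ K.erase k := fun h => hv (Finset.mem_of_mem_erase h)
        have hunot : u ∉ insert v (K.erase k) := by
          rw [Finset.mem_insert]
          rintro (rfl | h)
          · exact G.irrefl huv
          · exact hu (Finset.mem_of_mem_erase h)
        have hcard := hmax _ hcl2
        rw [Finset.card_insert_of_notMem hunot, Finset.card_insert_of_notMem hvnot,
          Finset.card_erase_of_mem hkK] at hcard
        have hKpos : 1 ≤ K.card := Finset.card_pos.2 ⟨k, hkK⟩
        omega

end Core

end Stmt10Aux

/-- For every positive integer `n` there is a constant `g` such that every
`(2K₂, P₄ ∨ Kₙ)`-free graph with no antihole on `6` or more vertices and clique number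
at least `g` has `χ(G) = ω(G)`. -/
theorem stmt10 (n : ℕ) (hn : 1 ≤ n) :
    ∃ g : ℕ, ∀ (V : Type) [Fintype V], ∀ G : SimpleGraph V,
      G.HFree twoK2 → G.HFree (P4JoinK n) →
      (∀ r : ℕ, 6 ≤ r → ¬ Nonempty ((cycleGraph r)ᶜ ↪g G)) →
      g ≤ G.cliqueNum → G.chromaticNumber = ↑G.cliqueNum := by
  classical
  refine ⟨3 * n + 10, ?_⟩
  intro V _ G h2 h4 _hanti hω
  obtain ⟨K, hK⟩ := G.exists_isNClique_cliqueNum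
  have hcl : G.IsClique (K : Set V) := hK.isClique
  have hcard : K.card = G.cliqueNum := hK.card_eq
  have hmax : ∀ s : Finset V, G.IsClique (s : Set V) → s.card ≤ K.card := by
    intro s hs
    rw [hcard]
    exact SimpleGraph.IsClique.card_le_cliqueNum (tc := hs)
  have hbigK : 3 * n + 10 ≤ K.card := by rw [hcard]; exact hω
  have hMne : ∀ v, v ∉ K → (Stmt10Aux.MM G K v).Nonempty := by
    intro v hv
    rw [Finset.nonempty_iff_ne_empty]
    intro hempty
    have hall : ∀ b ∈ K, v ≠ b → G.Adj v b := by
      intro b hb _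
      by_contra hnadj
      have : b ∈ Stmt10Aux.MM G K v := Stmt10Aux.mem_MM.2 ⟨hb, hnadj⟩
      rw [hempty] at this
      exact absurd this (Finset.notMem_empty b)
    have hcl2 : G.IsClique ((insert v K : Finset V) : Set V) := by
      rw [Finset.coe_insert]
      exact hcl.insert hall
    have := hmax _ hcl2
    rw [Finset.card_insert_of_notMem hv] at this
    omega
  set SS : V → Finset V := fun v =>
    if n + 2 ≤ (Stmt10Aux.MM G K v).card then Stmt10Aux.MM G K v \ Stmt10Aux.RR G K v
    else Stmt10Aux.MM G K v with hSS
  have hSSsub : ∀ v, SS v ⊆ Stmt10Aux.MM G K v := by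
    intro v
    rw [hSS]
    dsimp only
    split_ifs
    · exact Finset.sdiff_subset
    · exact subset_rfl
  have hSSne : ∀ v, v ∉ K → (SS v).Nonempty := by
    intro v hv
    rw [hSS]
    dsimp only
    split_ifs with hbig
    · rw [← Finset.card_pos, Finset.card_sdiff_of_subset Stmt10Aux.RR_subset]
      have := Stmt10Aux.RR_card_le h2 h4 hcl hv hbig
      omega
    · exact hMne v hv
  have hchoosemem : ∀ v (h : v ∉ K), (hSSne v h).choose ∈ K := fun v h =>
    Stmt10Aux.MM_subset (hSSsub v (hSSne v h).choose_spec)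
  set col : V → {x // x ∈ K} := fun v =>
    if h : v ∈ K then ⟨v, h⟩ else ⟨(hSSne v h).choose, hchoosemem v h⟩ with hcol
  have hvalid : ∀ {a b : V}, G.Adj a b → col a ≠ col b := by
    intro a b hadj heq
    have hval : (col a).1 = (col b).1 := congrArg Subtype.val heq
    by_cases ha : a ∈ K <;> by_cases hb : b ∈ K
    · rw [hcol] at hval
      simp only [dif_pos ha, dif_pos hb] at hval
      exact G.irrefl (hval ▸ hadj)
    · rw [hcol] at hval
      simp only [dif_pos ha, dif_neg hb] at hval
      have hmem : (hSSne b hb).choose ∈ Stmt10Aux.MM G K b :=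
        hSSsub b (hSSne b hb).choose_spec
      have := (Stmt10Aux.mem_MM.1 hmem).2
      rw [← hval] at this
      exact this hadj.symm
    · rw [hcol] at hval
      simp only [dif_neg ha, dif_pos hb] at hval
      have hmem : (hSSne a ha).choose ∈ Stmt10Aux.MM G K a :=
        hSSsub a (hSSne a ha).choose_spec
      have := (Stmt10Aux.mem_MM.1 hmem).2
      rw [hval] at this
      exact this hadj
    · rw [hcol] at hval
      simp only [dif_neg ha, dif_neg hb] at hval
      have hmema : (hSSne a ha).choose ∈ Stmt10Aux.MM G K a :=
        hSSsub a (hSSne a ha).choose_spec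
      have hmemb0 : (hSSne b hb).choose ∈ Stmt10Aux.MM G K b :=
        hSSsub b (hSSne b hb).choose_spec
      have hkey : ∀ v, n + 2 ≤ (Stmt10Aux.MM G K v).card →
          ∀ x ∈ SS v, x ∉ Stmt10Aux.RR G K v := by
        intro v hbig x hx
        have hSSv : SS v = Stmt10Aux.MM G K v \ Stmt10Aux.RR G K v := by
          rw [hSS]
          dsimp only
          rw [if_pos hbig]
        rw [hSSv] at hx
        exact (Finset.mem_sdiff.1 hx).2
      have hmemb : (hSSne a ha).choose ∈ Stmt10Aux.MM G K b := by
        rw [hval]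
        exact hmemb0
      rcases Stmt10Aux.conflict_big h2 h4 hcl hmax (by omega) ha hb hadj hmema hmemb
        with hbig | hbig
      · exact hkey a hbig _ (hSSne a ha).choose_spec
          (Stmt10Aux.mem_RR.2 ⟨hmema, b, hb, hadj, hmemb⟩)
      · refine hkey b hbig _ (hSSne b hb).choose_spec
          (Stmt10Aux.mem_RR.2 ⟨hmemb0, a, ha, hadj.symm, ?_⟩)
        rw [← hval]
        exact hmema
  have hcolorable : G.Colorable K.card := by
    have := (SimpleGraph.Coloring.mk col hvalid).colorable
    rwa [Fintype.card_coe] at this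
  have hle : G.chromaticNumber ≤ (G.cliqueNum : ℕ∞) := by
    rw [← hcard]
    exact hcolorable.chromaticNumber_le
  have hge : (G.cliqueNum : ℕ∞) ≤ G.chromaticNumber := by
    rw [← hcard]
    exact hK.isClique.card_le_chromaticNumber
  exact le_antisymm hle hge
end

section
/- For every positive integer n and every integer r ≥ 2n + 5, the complement of the cycle C_r contains an induced subgraph isomorphic to P₄ ∨ Kₙ. Consequently, a (P₄ ∨ Kₙ)-free graph contains no induced complement of C_r with r ≥ 2n + 5. -/
open SimpleGraph

lemma cyc_adj {r a b : ℕ} (ha : a + 1 < r) (hb : b + 1 < r) :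
    (cycleGraph r).Adj ⟨a, by omega⟩ ⟨b, by omega⟩ ↔ (a + 1 = b ∨ b + 1 = a) := by
  rw [cycleGraph_adj']
  have key : ∀ x y : ℕ, ∀ hx : x < r, ∀ hy : y < r,
      ((⟨x, hx⟩ - ⟨y, hy⟩ : Fin r)).val = if y ≤ x then x - y else x + r - y := by
    intro x y hx hy
    rw [Fin.sub_def]
    simp only []
    split_ifs with h
    · have : r - y + x = (x - y) + r := by omega
      rw [this, Nat.add_mod_right, Nat.mod_eq_of_lt (by omega)]
    · rw [Nat.mod_eq_of_lt (by omega)]; omega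
  rw [key a b, key b a]
  split_ifs <;> omega

def vmap (n : ℕ) : Fin 4 ⊕ Fin n → ℕ
  | Sum.inl i => ![1, 3, 0, 2] i
  | Sum.inr j => 5 + 2 * j

lemma vmap_lt (n r : ℕ) (hr : 2 * n + 5 ≤ r) (u : Fin 4 ⊕ Fin n) :
    vmap n u + 1 < r := by
  cases u with
  | inl i => fin_cases i <;> simp [vmap] <;> omega
  | inr j => have := j.isLt; simp [vmap]; omega


/-- For every positive integer `n` and `r ≥ 2n + 5`, the complement of `C_r` contains an
induced `P₄ ∨ Kₙ`; consequently a `(P₄ ∨ Kₙ)`-free graph contains no induced complement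
of `C_r` with `r ≥ 2n + 5`. -/
theorem stmt11 (n : ℕ) (hn : 1 ≤ n) (r : ℕ) (hr : 2 * n + 5 ≤ r) :
    Nonempty (P4JoinK n ↪g (cycleGraph r)ᶜ) ∧
    ∀ (V : Type) [Fintype V], ∀ G : SimpleGraph V,
      G.HFree (P4JoinK n) → ¬ Nonempty ((cycleGraph r)ᶜ ↪g G) := by
  have hemb : Nonempty (P4JoinK n ↪g (cycleGraph r)ᶜ) := by
    refine ⟨⟨⟨fun u => ⟨vmap n u, by have := vmap_lt n r hr u; omega⟩, ?_⟩, ?_⟩⟩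
    · intro u v huv
      have hv : vmap n u = vmap n v := by simpa [Fin.ext_iff] using huv
      cases u with
      | inl i => cases v with
        | inl i' =>
          congr 1
          fin_cases i <;> fin_cases i' <;> simp_all [vmap] <;> omega
        | inr j => have := j.isLt; fin_cases i <;> simp [vmap] at hv <;> omega
      | inr j => cases v with
        | inl i' => have := j.isLt; fin_cases i' <;> simp [vmap] at hv <;> omega
        | inr j' =>
          have : (j : ℕ) = j' := by simp [vmap] at hv; omega
          exact congrArg Sum.inr (Fin.ext this)
    · intro u v
      simp only [Function.Embedding.coeFn_mk, compl_adj]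
      show (⟨vmap n u, _⟩ : Fin r) ≠ ⟨vmap n v, _⟩ ∧ ¬(cycleGraph r).Adj ⟨vmap n u, _⟩ ⟨vmap n v, _⟩ ↔ (P4JoinK n).Adj u v
      rw [cyc_adj (vmap_lt n r hr u) (vmap_lt n r hr v)]
      have hju : ∀ j : Fin n, (j : ℕ) < n := fun j => j.isLt
      cases u with
      | inl i => cases v with
        | inl i' =>
          fin_cases i <;> fin_cases i' <;>
            simp [vmap, P4JoinK, SimpleGraph.join, pathGraph_adj, Fin.ext_iff] <;> omega
        | inr j =>
          have := j.isLt
          fin_cases i <;>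
            simp [vmap, P4JoinK, SimpleGraph.join, Fin.ext_iff] <;> omega
      | inr j => cases v with
        | inl i' =>
          have := j.isLt
          fin_cases i' <;>
            simp [vmap, P4JoinK, SimpleGraph.join, Fin.ext_iff] <;> omega
        | inr j' =>
          simp [vmap, P4JoinK, SimpleGraph.join, Fin.ext_iff]
          omega
  refine ⟨hemb, ?_⟩
  intro V _ G hfree ⟨e⟩
  exact hfree ⟨e.comp hemb.some⟩
end

section
/- For every positive integer n, the graph Xₙ = C₅ ∨ Kₙ satisfies χ(Xₙ) = n + 3 and ω(Xₙ) = n + 2, and Xₙ is 2K₂-free, 3K₁-free and C₄-free. -/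
open SimpleGraph

section Aux

lemma c5_adj01 : (cycleGraph 5).Adj 0 1 := by decide

lemma c5_no_triangle : ∀ a b c : Fin 5, (cycleGraph 5).Adj a b → (cycleGraph 5).Adj a c →
    (cycleGraph 5).Adj b c → False := by decide

lemma c5_no_indep3 : ∀ a b c : Fin 5, a ≠ b → a ≠ c → b ≠ c → ¬(cycleGraph 5).Adj a b →
    ¬(cycleGraph 5).Adj a c → ¬(cycleGraph 5).Adj b c → False := by decide

lemma c5_no_2K2 : ∀ a b c d : Fin 5, (cycleGraph 5).Adj a b ∧ (cycleGraph 5).Adj c d ∧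
    ¬(cycleGraph 5).Adj a c ∧ ¬(cycleGraph 5).Adj a d ∧ ¬(cycleGraph 5).Adj b c ∧
    ¬(cycleGraph 5).Adj b d → False := by decide

lemma c5_no_c4 : ∀ a b c d : Fin 5, a ≠ c ∧ b ≠ d ∧ (cycleGraph 5).Adj a b ∧
    (cycleGraph 5).Adj b c ∧ (cycleGraph 5).Adj c d ∧ (cycleGraph 5).Adj d a ∧
    ¬(cycleGraph 5).Adj a c ∧ ¬(cycleGraph 5).Adj b d → False := by decide

lemma c5_col : ∀ u v : Fin 5, (cycleGraph 5).Adj u v →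
    (![0,1,0,1,2] : Fin 5 → Fin 3) u ≠ ![0,1,0,1,2] v := by decide

lemma c5_not2col : ∀ c : Fin 5 → Fin 2, ∃ u v, (cycleGraph 5).Adj u v ∧ c u = c v := by decide

lemma c4_adj : (cycleGraph 4).Adj 0 1 ∧ (cycleGraph 4).Adj 1 2 ∧ (cycleGraph 4).Adj 2 3 ∧
    (cycleGraph 4).Adj 3 0 ∧ ¬(cycleGraph 4).Adj 0 2 ∧ ¬(cycleGraph 4).Adj 1 3 := by decide

variable {α β : Type*} {G : SimpleGraph α} {H : SimpleGraph β}

@[simp] lemma join_adj_ll {u v : α} : (G.join H).Adj (Sum.inl u) (Sum.inl v) ↔ G.Adj u v :=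
  Iff.rfl

@[simp] lemma join_adj_rr {u v : β} : (G.join H).Adj (Sum.inr u) (Sum.inr v) ↔ H.Adj u v :=
  Iff.rfl

@[simp] lemma join_adj_lr {u : α} {v : β} : (G.join H).Adj (Sum.inl u) (Sum.inr v) :=
  trivial

@[simp] lemma join_adj_rl {u : β} {v : α} : (G.join H).Adj (Sum.inr u) (Sum.inl v) :=
  trivial

/-- In `C₅ ∨ Kₙ`, distinct non-adjacent vertices both lie on the left. -/
lemma left_of_not_adj {n : ℕ} {x y : Fin 5 ⊕ Fin n}
    (hne : x ≠ y)
    (h : ¬ (SimpleGraph.join (cycleGraph 5) (⊤ : SimpleGraph (Fin n))).Adj x y) :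
    ∃ u v, x = Sum.inl u ∧ y = Sum.inl v ∧ ¬ (cycleGraph 5).Adj u v := by
  match x, y with
  | Sum.inl u, Sum.inl v => exact ⟨u, v, rfl, rfl, h⟩
  | Sum.inl u, Sum.inr v => exact absurd join_adj_lr h
  | Sum.inr u, Sum.inl v => exact absurd join_adj_rl h
  | Sum.inr u, Sum.inr v =>
      exact absurd (join_adj_rr.mpr (by simpa using fun huv => hne (by rw [huv]))) h

end Aux

/-- `Xₙ = C₅ ∨ Kₙ` has chromatic number `n + 3`, clique number `n + 2`, and is
`2K₂`-free, `3K₁`-free and `C₄`-free. -/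
theorem stmt12 (n : ℕ) (hn : 1 ≤ n) :
    (SimpleGraph.join (cycleGraph 5) (⊤ : SimpleGraph (Fin n))).chromaticNumber
        = ↑(n + 3) ∧
    (SimpleGraph.join (cycleGraph 5) (⊤ : SimpleGraph (Fin n))).cliqueNum = n + 2 ∧
    (SimpleGraph.join (cycleGraph 5) (⊤ : SimpleGraph (Fin n))).HFree twoK2 ∧
    (SimpleGraph.join (cycleGraph 5) (⊤ : SimpleGraph (Fin n))).HFree
        (⊥ : SimpleGraph (Fin 3)) ∧
    (SimpleGraph.join (cycleGraph 5) (⊤ : SimpleGraph (Fin n))).HFree (cycleGraph 4) := by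
  set Gr := SimpleGraph.join (cycleGraph 5) (⊤ : SimpleGraph (Fin n)) with hGr
  -- colorable with n+3 colors
  have hcol : Gr.Colorable (n + 3) := by
    have C : Gr.Coloring (Fin (n + 3)) := by
      refine Coloring.mk
        (fun x => match x with
          | Sum.inl v => Fin.castLE (by omega) ((![0,1,0,1,2] : Fin 5 → Fin 3) v)
          | Sum.inr i => ⟨3 + i, by omega⟩) ?_
      rintro (u | u) (v | v) h
      · intro hc
        exact c5_col u v h (Fin.castLE_injective _ hc)
      · intro hc
        have := congrArg Fin.val hc
        simp only [Fin.coe_castLE] at this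
        have h3 : ((![0,1,0,1,2] : Fin 5 → Fin 3) u).val < 3 := Fin.is_lt _
        omega
      · intro hc
        have := congrArg Fin.val hc
        simp only [Fin.coe_castLE] at this
        have h3 : ((![0,1,0,1,2] : Fin 5 → Fin 3) v).val < 3 := Fin.is_lt _
        omega
      · intro hc
        have hne : u ≠ v := h
        have := congrArg Fin.val hc
        simp only at this
        exact hne (Fin.val_injective (by omega))
    simpa using C.colorable
  -- not colorable with n+2 colors
  have hnotcol : ¬ Gr.Colorable (n + 2) := by
    rintro ⟨C⟩
    set g : Fin n → Fin (n + 2) := fun i => C (Sum.inr i) with hg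
    have hginj : Function.Injective g := by
      intro i j hij
      by_contra hne
      exact C.valid (show Gr.Adj (Sum.inr i) (Sum.inr j) from hne) hij
    set T : Finset (Fin (n + 2)) := (Finset.univ.image g)ᶜ with hT
    have hTcard : T.card = 2 := by
      rw [hT, Finset.card_compl, Finset.card_image_of_injective _ hginj]
      simp
    have hmem : ∀ v : Fin 5, C (Sum.inl v) ∈ T := by
      intro v
      simp only [hT, Finset.mem_compl, Finset.mem_image, Finset.mem_univ, true_and]
      rintro ⟨i, hi⟩
      exact C.valid (show Gr.Adj (Sum.inl v) (Sum.inr i) from join_adj_lr) hi.symm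
    have e : {x // x ∈ T} ≃ Fin 2 := Fintype.equivFinOfCardEq (by simpa using hTcard)
    obtain ⟨u, v, hadj, heq⟩ := c5_not2col (fun v => e ⟨C (Sum.inl v), hmem v⟩)
    have : C (Sum.inl u) = C (Sum.inl v) := by
      have := e.injective heq
      exact congrArg Subtype.val this
    exact C.valid (show Gr.Adj (Sum.inl u) (Sum.inl v) from hadj) this
  refine ⟨?_, ?_, ?_, ?_, ?_⟩
  · -- chromatic number
    refine le_antisymm hcol.chromaticNumber_le ?_
    by_contra h
    push_neg at h
    have hle : Gr.chromaticNumber ≤ ((n + 2 : ℕ) : ℕ∞) := by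
      have hcast : ((n + 3 : ℕ) : ℕ∞) = ((n + 2 : ℕ) : ℕ∞) + 1 := by push_cast; ring
      rw [hcast] at h
      exact (ENat.lt_add_one_iff (by exact_mod_cast ENat.coe_ne_top (n+2))).mp h
    exact hnotcol (chromaticNumber_le_iff_colorable.mp hle)
  · -- clique number
    have hub : ∀ s : Finset (Fin 5 ⊕ Fin n), Gr.IsClique s → s.card ≤ n + 2 := by
      intro s hs
      classical
      set L := s.filter (fun x => x.isLeft) with hL
      set R := s.filter (fun x => ¬ x.isLeft) with hR
      have hLR : L.card + R.card = s.card := Finset.card_filter_add_card_filter_not _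
      have hLle : L.card ≤ 2 := by
        by_contra hcon
        push_neg at hcon
        obtain ⟨t, hts, ht3⟩ := Finset.exists_subset_card_eq hcon
        rw [Finset.card_eq_three] at ht3
        obtain ⟨x, y, z, hxy, hxz, hyz, rfl⟩ := ht3
        have hx : x ∈ L := hts (by simp)
        have hy : y ∈ L := hts (by simp)
        have hz : z ∈ L := hts (by simp)
        simp only [hL, Finset.mem_filter, Sum.isLeft_iff] at hx hy hz
        obtain ⟨hxs, a, rfl⟩ := hx
        obtain ⟨hys, b, rfl⟩ := hy
        obtain ⟨hzs, c, rfl⟩ := hz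
        exact c5_no_triangle a b c (hs hxs hys hxy) (hs hxs hzs hxz) (hs hys hzs hyz)
      have hRle : R.card ≤ n := by
        have hsub : R ⊆ Finset.univ.image Sum.inr := by
          intro x hx
          simp only [hR, Finset.mem_filter, Sum.not_isLeft, Sum.isRight_iff] at hx
          obtain ⟨-, b, rfl⟩ := hx
          simp
        calc R.card ≤ (Finset.univ.image (Sum.inr : Fin n → Fin 5 ⊕ Fin n)).card :=
              Finset.card_le_card hsub
          _ ≤ (Finset.univ : Finset (Fin n)).card := Finset.card_image_le
          _ = n := by simp
      omega
    have hwit : Gr.IsNClique (n + 2)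
        (insert (Sum.inl 0) (insert (Sum.inl 1)
          ((Finset.univ : Finset (Fin n)).image (Sum.inr : Fin n → Fin 5 ⊕ Fin n)))) := by
      constructor
      · intro x hx y hy hxy
        simp only [Finset.coe_insert, Set.mem_insert_iff, Finset.coe_image, Finset.coe_univ,
          Set.image_univ, Set.mem_range] at hx hy
        rcases hx with rfl | rfl | ⟨a, rfl⟩ <;> rcases hy with rfl | rfl | ⟨b, rfl⟩
        · exact absurd rfl hxy
        · exact c5_adj01
        · exact join_adj_lr
        · exact Gr.adj_symm c5_adj01
        · exact absurd rfl hxy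
        · exact join_adj_lr
        · exact join_adj_rl
        · exact join_adj_rl
        · exact join_adj_rr.mpr (by simpa using fun hab => hxy (by rw [hab]))
      · rw [Finset.card_insert_of_notMem (by simp), Finset.card_insert_of_notMem (by simp),
          Finset.card_image_of_injective _ Sum.inr_injective]
        simp only [Finset.card_univ, Fintype.card_fin]
    refine le_antisymm ?_ ?_
    · obtain ⟨s, hclique, hcard⟩ := Gr.exists_isNClique_cliqueNum
      rw [← hcard]
      exact hub s hclique
    · have := IsClique.card_le_cliqueNum (G := Gr) (tc := hwit.1)
      rwa [hwit.2] at this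
  · -- 2K₂-free
    rintro ⟨f⟩
    have hadj : ∀ x y : Fin 2 ⊕ Fin 2, twoK2.Adj x y → Gr.Adj (f x) (f y) :=
      fun x y h => f.map_rel_iff.mpr h
    have hnadj : ∀ x y : Fin 2 ⊕ Fin 2, ¬ twoK2.Adj x y → ¬ Gr.Adj (f x) (f y) :=
      fun x y h hc => h (f.map_rel_iff.mp hc)
    have h02 : ¬ twoK2.Adj (Sum.inl 0) (Sum.inr 0) := by simp [twoK2]
    have h03 : ¬ twoK2.Adj (Sum.inl 0) (Sum.inr 1) := by simp [twoK2]
    have h12 : ¬ twoK2.Adj (Sum.inl 1) (Sum.inr 0) := by simp [twoK2]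
    have h13 : ¬ twoK2.Adj (Sum.inl 1) (Sum.inr 1) := by simp [twoK2]
    obtain ⟨a, c, ha, hc, hac⟩ := left_of_not_adj
      (f.injective.ne (by simp)) (hnadj _ _ h02)
    obtain ⟨a2, d, ha2, hd, had⟩ := left_of_not_adj
      (f.injective.ne (by simp)) (hnadj _ _ h03)
    obtain ⟨b, c2, hb, hc2, hbc⟩ := left_of_not_adj
      (f.injective.ne (by simp)) (hnadj _ _ h12)
    obtain ⟨b2, d2, hb2, hd2, hbd⟩ := left_of_not_adj
      (f.injective.ne (by simp)) (hnadj _ _ h13)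
    have ea : a2 = a := Sum.inl_injective (ha2.symm.trans ha)
    have eb : b2 = b := Sum.inl_injective (hb2.symm.trans hb)
    have ec : c2 = c := Sum.inl_injective (hc2.symm.trans hc)
    have ed : d2 = d := Sum.inl_injective (hd2.symm.trans hd)
    rw [ea] at had
    rw [ec] at hbc
    rw [eb, ed] at hbd
    have hab : (cycleGraph 5).Adj a b := by
      have := hadj (Sum.inl 0) (Sum.inl 1) (by simp [twoK2])
      rwa [ha, hb] at this
    have hcd : (cycleGraph 5).Adj c d := by
      have := hadj (Sum.inr 0) (Sum.inr 1) (by simp [twoK2])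
      rwa [hc, hd] at this
    exact c5_no_2K2 a b c d ⟨hab, hcd, hac, had, hbc, hbd⟩
  · -- 3K₁-free
    rintro ⟨f⟩
    have hnadj : ∀ x y : Fin 3, ¬ Gr.Adj (f x) (f y) :=
      fun x y hc => by simpa using f.map_rel_iff.mp hc
    obtain ⟨a, b, hfa, hfb, hab⟩ := left_of_not_adj
      (f.injective.ne (by decide : (0 : Fin 3) ≠ 1)) (hnadj 0 1)
    obtain ⟨a2, c, hfa2, hfc, hac⟩ := left_of_not_adj
      (f.injective.ne (by decide : (0 : Fin 3) ≠ 2)) (hnadj 0 2)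
    obtain ⟨b2, c2, hfb2, hfc2, hbc⟩ := left_of_not_adj
      (f.injective.ne (by decide : (1 : Fin 3) ≠ 2)) (hnadj 1 2)
    have ea : a2 = a := Sum.inl_injective (hfa2.symm.trans hfa)
    have eb : b2 = b := Sum.inl_injective (hfb2.symm.trans hfb)
    have ec : c2 = c := Sum.inl_injective (hfc2.symm.trans hfc)
    rw [ea] at hac
    rw [eb, ec] at hbc
    have hab' : a ≠ b := fun h => f.injective.ne (by decide : (0 : Fin 3) ≠ 1)
      (by rw [hfa, hfb, h])
    have hac' : a ≠ c := fun h => f.injective.ne (by decide : (0 : Fin 3) ≠ 2)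
      (by rw [hfa, hfc, h])
    have hbc' : b ≠ c := fun h => f.injective.ne (by decide : (1 : Fin 3) ≠ 2)
      (by rw [hfb, hfc, h])
    exact c5_no_indep3 a b c hab' hac' hbc' hab hac hbc
  · -- C₄-free
    rintro ⟨f⟩
    obtain ⟨hc01, hc12, hc23, hc30, hc02, hc13⟩ := c4_adj
    have hnadj : ∀ x y : Fin 4, ¬ (cycleGraph 4).Adj x y → ¬ Gr.Adj (f x) (f y) :=
      fun x y h hc => h (f.map_rel_iff.mp hc)
    obtain ⟨a, c, hfa, hfc, hac⟩ := left_of_not_adj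
      (f.injective.ne (by decide : (0 : Fin 4) ≠ 2)) (hnadj 0 2 hc02)
    obtain ⟨b, d, hfb, hfd, hbd⟩ := left_of_not_adj
      (f.injective.ne (by decide : (1 : Fin 4) ≠ 3)) (hnadj 1 3 hc13)
    have hab : (cycleGraph 5).Adj a b := by
      have := f.map_rel_iff.mpr hc01; rwa [hfa, hfb] at this
    have hbc : (cycleGraph 5).Adj b c := by
      have := f.map_rel_iff.mpr hc12; rwa [hfb, hfc] at this
    have hcd : (cycleGraph 5).Adj c d := by
      have := f.map_rel_iff.mpr hc23; rwa [hfc, hfd] at this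
    have hda : (cycleGraph 5).Adj d a := by
      have := f.map_rel_iff.mpr hc30; rwa [hfd, hfa] at this
    have hac' : a ≠ c := fun h => f.injective.ne (by decide : (0 : Fin 4) ≠ 2)
      (by rw [hfa, hfc, h])
    have hbd' : b ≠ d := fun h => f.injective.ne (by decide : (1 : Fin 4) ≠ 3)
      (by rw [hfb, hfd, h])
    exact c5_no_c4 a b c d ⟨hac', hbd', hab, hbc, hcd, hda, hac, hbd⟩
end

section
/- For every positive integer n, let Yₙ be the graph obtained from a 5-cycle v₁v₂v₃v₄v₅ by blowing up the two nonadjacent vertices v₂ and v₅ each into a clique of size n (i.e., the vertex set is {v₁, v₃, v₄} ∪ A ∪ B where A and B are disjoint cliques of size n, A is complete to {v₁, v₃}, B is complete to {v₁, v₄}, v₃v₄ is an edge, and there are no other edges). Then χ(Yₙ) = n + 2, ω(Yₙ) = n + 1, and Yₙ is gem-free, HVN-free, 3K₁-free and C₄-free. -/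
set_option maxRecDepth 40000


open SimpleGraph

/-- `(K₂ + K₁) ∨ Kₙ`: the join of the disjoint union of `K₂` and `K₁` with `Kₙ`. -/
def K2K1JoinK (n : ℕ) : SimpleGraph ((Fin 2 ⊕ Fin 1) ⊕ Fin n) :=
  SimpleGraph.join ((⊤ : SimpleGraph (Fin 2)) ⊕g (⊤ : SimpleGraph (Fin 1))) (⊤ : SimpleGraph (Fin n))

/-- The relation generating `Yₙ`: vertices `Sum.inl 0, Sum.inl 1, Sum.inl 2` are
`v₁, v₃, v₄`; `A` is the first copy of `Fin n`, `B` the second. Edges: `v₃v₄`,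
`A` complete to `{v₁, v₃}`, `B` complete to `{v₁, v₄}`, and `A`, `B` are cliques. -/
def Yrel (n : ℕ) : (Fin 3 ⊕ Fin n ⊕ Fin n) → (Fin 3 ⊕ Fin n ⊕ Fin n) → Prop
  | Sum.inl a, Sum.inl b => a = 1 ∧ b = 2
  | Sum.inl a, Sum.inr (Sum.inl _) => a = 0 ∨ a = 1
  | Sum.inl a, Sum.inr (Sum.inr _) => a = 0 ∨ a = 2
  | Sum.inr (Sum.inl _), Sum.inr (Sum.inl _) => True
  | Sum.inr (Sum.inr _), Sum.inr (Sum.inr _) => True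
  | _, _ => False

/-- `Yₙ`: the graph obtained from a five-cycle `v₁v₂v₃v₄v₅` by blowing up the two
nonadjacent vertices `v₂` and `v₅` into cliques `A` and `B` of size `n`. -/
def Y (n : ℕ) : SimpleGraph (Fin 3 ⊕ Fin n ⊕ Fin n) := SimpleGraph.fromRel (Yrel n)

/-- The gem, `P₄ ∨ K₁`. -/
def gem : SimpleGraph (Fin 4 ⊕ Fin 1) :=
  SimpleGraph.join (pathGraph 4) (⊤ : SimpleGraph (Fin 1))

namespace S13

def t {n : ℕ} : (Fin 3 ⊕ Fin n ⊕ Fin n) → Fin 5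
  | Sum.inl i => ⟨i.val, by omega⟩
  | Sum.inr (Sum.inl _) => 3
  | Sum.inr (Sum.inr _) => 4

def R (i j : Fin 5) : Bool :=
  decide ((i.val, j.val) ∈ [(0,3),(3,0),(0,4),(4,0),(1,2),(2,1),(1,3),(3,1),(2,4),(4,2),(3,3),(4,4)])

lemma yrel_R {n : ℕ} (u v : Fin 3 ⊕ Fin n ⊕ Fin n) :
    (Yrel n u v ∨ Yrel n v u) ↔ R (t u) (t v) = true := by
  rcases u with a | a | a <;> rcases v with b | b | b <;>
    simp only [Yrel, t, R] <;>
    first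
      | (fin_cases a <;> fin_cases b <;> simp <;> decide)
      | (fin_cases a <;> simp <;> decide)
      | (fin_cases b <;> simp <;> decide)
      | (simp <;> decide)

lemma Y_adj {n : ℕ} (u v : Fin 3 ⊕ Fin n ⊕ Fin n) :
    (Y n).Adj u v ↔ u ≠ v ∧ R (t u) (t v) = true := by
  rw [Y, SimpleGraph.fromRel_adj, yrel_R]

lemma t_low_inj {n : ℕ} (u v : Fin 3 ⊕ Fin n ⊕ Fin n) (h : t u = t v) (hl : (t u).val < 3) :
    u = v := by
  rcases u with a | a | a <;> rcases v with b | b | b <;>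
    simp_all [t, Fin.ext_iff] <;> omega

lemma indep3_check : ∀ p q r : Fin 5, p ≠ q → p ≠ r → q ≠ r →
    R p q = true ∨ R p r = true ∨ R q r = true := by decide

lemma Rdiag : ∀ p : Fin 5, 3 ≤ p.val → R p p = true := by decide

lemma no_indep3 {n : ℕ} (x y z : Fin 3 ⊕ Fin n ⊕ Fin n) (hxy : x ≠ y) (hxz : x ≠ z)
    (hyz : y ≠ z) : (Y n).Adj x y ∨ (Y n).Adj x z ∨ (Y n).Adj y z := by
  have same : ∀ u v : Fin 3 ⊕ Fin n ⊕ Fin n, u ≠ v → t u = t v → (Y n).Adj u v := by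
    intro u v huv h
    rw [Y_adj]
    refine ⟨huv, ?_⟩
    by_cases hl : (t u).val < 3
    · exact absurd (t_low_inj u v h hl) huv
    · rw [← h]; exact Rdiag _ (by omega)
  by_cases h1 : t x = t y
  · exact Or.inl (same x y hxy h1)
  by_cases h2 : t x = t z
  · exact Or.inr (Or.inl (same x z hxz h2))
  by_cases h3 : t y = t z
  · exact Or.inr (Or.inr (same y z hyz h3))
  rcases indep3_check _ _ _ h1 h2 h3 with h | h | h
  · exact Or.inl ((Y_adj _ _).mpr ⟨hxy, h⟩)
  · exact Or.inr (Or.inl ((Y_adj _ _).mpr ⟨hxz, h⟩))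
  · exact Or.inr (Or.inr ((Y_adj _ _).mpr ⟨hyz, h⟩))

lemma col_lb {n : ℕ} (m : ℕ) (hc : (Y n).Colorable m) : n + 2 ≤ m := by
  classical
  obtain ⟨C⟩ := hc
  have hfib : ∀ c : Fin m, (Finset.univ.filter fun v => C v = c).card ≤ 2 := by
    intro c
    by_contra h
    push_neg at h
    obtain ⟨x, hx, y, hy, z, hz, hxy, hxz, hyz⟩ := Finset.two_lt_card.mp h
    simp only [Finset.mem_filter] at hx hy hz
    rcases no_indep3 x y z hxy hxz hyz with h' | h' | h'
    · exact C.valid h' (hx.2.trans hy.2.symm)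
    · exact C.valid h' (hx.2.trans hz.2.symm)
    · exact C.valid h' (hy.2.trans hz.2.symm)
  have hcard : (Finset.univ : Finset (Fin 3 ⊕ Fin n ⊕ Fin n)).card = 2 * n + 3 := by
    simp [Finset.card_univ]
    omega
  have hdecomp := Finset.card_eq_sum_card_fiberwise
    (f := C) (s := Finset.univ) (t := Finset.univ) (fun x _ => Finset.mem_univ _)
  have hsum : ∑ c : Fin m, (Finset.univ.filter fun v => C v = c).card ≤ ∑ _c : Fin m, 2 :=
    Finset.sum_le_sum fun c _ => hfib c
  simp only [Finset.sum_const, Finset.card_univ, Fintype.card_fin, smul_eq_mul] at hsum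
  omega

def col {n : ℕ} : (Fin 3 ⊕ Fin n ⊕ Fin n) → Fin (n + 2)
  | Sum.inl i => if i.val = 2 then ⟨n + 1, by omega⟩ else ⟨n, by omega⟩
  | Sum.inr (Sum.inl a) => ⟨a.val, by omega⟩
  | Sum.inr (Sum.inr b) => ⟨b.val, by omega⟩

lemma col_valid {n : ℕ} {u v : Fin 3 ⊕ Fin n ⊕ Fin n} (h : (Y n).Adj u v) :
    col u ≠ col v := by
  rw [Y_adj] at h
  obtain ⟨hne, hR⟩ := h
  rcases u with a | a | a <;> rcases v with b | b | b <;>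
    simp only [col, t, Fin.ext_iff] at hR ⊢
  · fin_cases a <;> fin_cases b <;> simp_all [R]
  · fin_cases a <;> simp_all [R] <;> omega
  · fin_cases a <;> simp_all [R] <;> omega
  · fin_cases b <;> simp_all [R] <;> omega
  · have : a ≠ b := fun hab => hne (by rw [hab])
    simp [Fin.val_eq_val, this]
  · exact absurd hR (by decide)
  · fin_cases b <;> simp_all [R] <;> omega
  · exact absurd hR (by decide)
  · have : a ≠ b := fun hab => hne (by rw [hab])
    simp [Fin.val_eq_val, this]

lemma chrom_eq {n : ℕ} (hn : 1 ≤ n) : (Y n).chromaticNumber = (n + 2 : ℕ) := by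
  apply le_antisymm
  · exact Colorable.chromaticNumber_le ⟨⟨col, fun h => col_valid h⟩⟩
  · rw [SimpleGraph.chromaticNumber]
    refine le_iInf₂ fun m hm => ?_
    exact_mod_cast col_lb m hm

-- clique number
def Aimg (n : ℕ) : Finset (Fin 3 ⊕ Fin n ⊕ Fin n) :=
  Finset.univ.image fun a : Fin n => Sum.inr (Sum.inl a)

lemma Aimg_card (n : ℕ) : (Aimg n).card = n := by
  rw [Aimg, Finset.card_image_of_injective _ (fun a b hab => by simpa using hab)]
  simp

lemma maxClique {n : ℕ} : (Y n).IsNClique (n + 1) (insert (Sum.inl 0) (Aimg n)) := by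
  constructor
  · intro x hx y hy hne
    rw [Y_adj]
    refine ⟨hne, ?_⟩
    rcases Finset.mem_insert.mp hx with rfl | hx' <;>
      rcases Finset.mem_insert.mp hy with rfl | hy'
    · exact absurd rfl hne
    · obtain ⟨b, -, rfl⟩ := Finset.mem_image.mp hy'
      exact (by decide : R 0 3 = true)
    · obtain ⟨a, -, rfl⟩ := Finset.mem_image.mp hx'
      exact (by decide : R 3 0 = true)
    · obtain ⟨a, -, rfl⟩ := Finset.mem_image.mp hx'
      obtain ⟨b, -, rfl⟩ := Finset.mem_image.mp hy'
      exact (by decide : R 3 3 = true)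
  · rw [Finset.card_insert_of_notMem (by simp [Aimg]), Aimg_card]

lemma clique_bound {n : ℕ} (hn : 1 ≤ n) (s : Finset (Fin 3 ⊕ Fin n ⊕ Fin n))
    (hs : (Y n).IsClique s) : s.card ≤ n + 1 := by
  classical
  have adj : ∀ {x y : Fin 3 ⊕ Fin n ⊕ Fin n}, x ∈ s → y ∈ s → x ≠ y →
      R (t x) (t y) = true := fun hx hy hne => ((Y_adj _ _).mp (hs hx hy hne)).2
  by_cases hA : ∃ a : Fin n, Sum.inr (Sum.inl a) ∈ s
  · obtain ⟨a0, ha0⟩ := hA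
    have hsub : ∀ x ∈ s, x = Sum.inl 0 ∨ x = Sum.inl 1 ∨ x ∈ Aimg n := by
      intro x hx
      rcases x with c | c | c
      · fin_cases c
        · exact Or.inl rfl
        · exact Or.inr (Or.inl rfl)
        · exact absurd (adj hx ha0 (by simp)) (show ¬ R 2 3 = true by decide)
      · exact Or.inr (Or.inr (by simp [Aimg]))
      · exact absurd (adj ha0 hx (by simp)) (show ¬ R 3 4 = true by decide)
    by_cases h0 : (Sum.inl 0 : Fin 3 ⊕ Fin n ⊕ Fin n) ∈ s
    · have hsub' : s ⊆ insert (Sum.inl 0) (Aimg n) := by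
        intro x hx
        rcases hsub x hx with rfl | rfl | hx'
        · exact Finset.mem_insert_self _ _
        · exact absurd (adj h0 hx (by simp)) (show ¬ R 0 1 = true by decide)
        · exact Finset.mem_insert_of_mem hx'
      calc s.card ≤ _ := Finset.card_le_card hsub'
        _ ≤ (Aimg n).card + 1 := Finset.card_insert_le _ _
        _ = n + 1 := by rw [Aimg_card]
    · have hsub' : s ⊆ insert (Sum.inl 1) (Aimg n) := by
        intro x hx
        rcases hsub x hx with rfl | rfl | hx'
        · exact absurd hx h0
        · exact Finset.mem_insert_self _ _
        · exact Finset.mem_insert_of_mem hx'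
      calc s.card ≤ _ := Finset.card_le_card hsub'
        _ ≤ (Aimg n).card + 1 := Finset.card_insert_le _ _
        _ = n + 1 := by rw [Aimg_card]
  · by_cases hB : ∃ b : Fin n, Sum.inr (Sum.inr b) ∈ s
    · obtain ⟨b0, hb0⟩ := hB
      set Bimg : Finset (Fin 3 ⊕ Fin n ⊕ Fin n) :=
        Finset.univ.image fun b : Fin n => Sum.inr (Sum.inr b) with hBimg
      have hBcard : Bimg.card = n := by
        rw [hBimg, Finset.card_image_of_injective _ (fun a b hab => by simpa using hab)]
        simp
      have hsub : ∀ x ∈ s, x = Sum.inl 0 ∨ x = Sum.inl 2 ∨ x ∈ Bimg := by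
        intro x hx
        rcases x with c | c | c
        · fin_cases c
          · exact Or.inl rfl
          · exact absurd (adj hx hb0 (by simp)) (show ¬ R 1 4 = true by decide)
          · exact Or.inr (Or.inl rfl)
        · exact absurd ⟨c, hx⟩ hA
        · exact Or.inr (Or.inr (by simp [hBimg]))
      by_cases h0 : (Sum.inl 0 : Fin 3 ⊕ Fin n ⊕ Fin n) ∈ s
      · have hsub' : s ⊆ insert (Sum.inl 0) Bimg := by
          intro x hx
          rcases hsub x hx with rfl | rfl | hx'
          · exact Finset.mem_insert_self _ _
          · exact absurd (adj h0 hx (by simp)) (show ¬ R 0 2 = true by decide)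
          · exact Finset.mem_insert_of_mem hx'
        calc s.card ≤ _ := Finset.card_le_card hsub'
          _ ≤ Bimg.card + 1 := Finset.card_insert_le _ _
          _ = n + 1 := by rw [hBcard]
      · have hsub' : s ⊆ insert (Sum.inl 2) Bimg := by
          intro x hx
          rcases hsub x hx with rfl | rfl | hx'
          · exact absurd hx h0
          · exact Finset.mem_insert_self _ _
          · exact Finset.mem_insert_of_mem hx'
        calc s.card ≤ _ := Finset.card_le_card hsub'
          _ ≤ Bimg.card + 1 := Finset.card_insert_le _ _
          _ = n + 1 := by rw [hBcard]
    · have hsub : s ⊆ ({Sum.inl 0, Sum.inl 1, Sum.inl 2} : Finset _) := by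
        intro x hx
        rcases x with c | c | c
        · fin_cases c <;> simp
        · exact absurd ⟨c, hx⟩ hA
        · exact absurd ⟨c, hx⟩ hB
      by_cases h0 : (Sum.inl 0 : Fin 3 ⊕ Fin n ⊕ Fin n) ∈ s
      · have hsub' : s ⊆ {Sum.inl 0} := by
          intro x hx
          have hm := hsub hx
          simp only [Finset.mem_insert, Finset.mem_singleton] at hm
          rcases hm with rfl | rfl | rfl
          · simp
          · exact absurd (adj h0 hx (by simp)) (show ¬ R 0 1 = true by decide)
          · exact absurd (adj h0 hx (by simp)) (show ¬ R 0 2 = true by decide)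
        have := Finset.card_le_card hsub'
        simp at this
        omega
      · have hsub' : s ⊆ {Sum.inl 1, Sum.inl 2} := by
          intro x hx
          have hm := hsub hx
          simp only [Finset.mem_insert, Finset.mem_singleton] at hm
          rcases hm with rfl | rfl | rfl
          · exact absurd hx h0
          · simp
          · simp
        have := Finset.card_le_card hsub'
        have h2 : ({Sum.inl 1, Sum.inl 2} : Finset (Fin 3 ⊕ Fin n ⊕ Fin n)).card ≤ 2 :=
          Finset.card_le_two
        omega

lemma cliqueNum_eq {n : ℕ} (hn : 1 ≤ n) : (Y n).cliqueNum = n + 1 := by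
  apply le_antisymm
  · obtain ⟨s, hs⟩ := (Y n).exists_isNClique_cliqueNum
    rw [← hs.card_eq]
    exact clique_bound hn s hs.isClique
  · have h := maxClique (n := n)
    rw [← h.card_eq]
    exact SimpleGraph.IsClique.card_le_cliqueNum (tc := h.isClique)

def PC (B : Bool) (a b : Fin 5) : Prop := (B = true ↔ R a b = true) ∧ (a = b → 3 ≤ a.val)

instance (B : Bool) (a b : Fin 5) : Decidable (PC B a b) := by unfold PC; infer_instance

lemma key_of_emb {n : ℕ} {W : Type*} (H : SimpleGraph W) (B : W → W → Bool)
    (hB : ∀ i j, H.Adj i j ↔ B i j = true) (f : H ↪g (Y n)) :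
    ∀ i j, i ≠ j → PC (B i j) (t (f i)) (t (f j)) := by
  intro i j hij
  have hf : f i ≠ f j := fun h => hij (f.injective h)
  constructor
  · rw [← hB, ← f.map_adj_iff, Y_adj]
    exact ⟨fun h => h.2, fun h => ⟨hf, h⟩⟩
  · intro h
    by_contra hlt
    push_neg at hlt
    exact hf (t_low_inj _ _ h hlt)

-- B matrices
def Bgem : (Fin 4 ⊕ Fin 1) → (Fin 4 ⊕ Fin 1) → Bool
  | Sum.inl i, Sum.inl j => decide (i.val + 1 = j.val) || decide (j.val + 1 = i.val)
  | Sum.inr i, Sum.inr j => decide (i ≠ j)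
  | _, _ => true

lemma gem_adj (i j : Fin 4 ⊕ Fin 1) : gem.Adj i j ↔ Bgem i j = true := by
  rcases i with a | a <;> rcases j with b | b
  · show (pathGraph 4).Adj a b ↔ _
    rw [pathGraph_adj]; simp [Bgem]
  · simp [gem, SimpleGraph.join, Bgem]
  · simp [gem, SimpleGraph.join, Bgem]
  · show a ≠ b ↔ _
    simp [Bgem]

def Bhvn : ((Fin 2 ⊕ Fin 1) ⊕ Fin 2) → ((Fin 2 ⊕ Fin 1) ⊕ Fin 2) → Bool
  | Sum.inl (Sum.inl i), Sum.inl (Sum.inl j) => decide (i ≠ j)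
  | Sum.inl (Sum.inr _), Sum.inl (Sum.inr _) => false
  | Sum.inl _, Sum.inl _ => false
  | Sum.inr i, Sum.inr j => decide (i ≠ j)
  | _, _ => true

lemma hvn_adj (i j : (Fin 2 ⊕ Fin 1) ⊕ Fin 2) : (K2K1JoinK 2).Adj i j ↔ Bhvn i j = true := by
  rcases i with (a | a) | a <;> rcases j with (b | b) | b
  · show a ≠ b ↔ _ ; simp [Bhvn]
  · show (false = true) ↔ _ ; simp [Bhvn]
  · show True ↔ _ ; simp [Bhvn]
  · show (false = true) ↔ _ ; simp [Bhvn]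
  · show a ≠ b ↔ _ ; simp [Bhvn, Subsingleton.elim a b]
  · show True ↔ _ ; simp [Bhvn]
  · show True ↔ _ ; simp [Bhvn]
  · show True ↔ _ ; simp [Bhvn]
  · show a ≠ b ↔ _ ; simp [Bhvn]

def Bbot : Fin 3 → Fin 3 → Bool := fun _ _ => false

lemma bot_adj (i j : Fin 3) : (⊥ : SimpleGraph (Fin 3)).Adj i j ↔ Bbot i j = true := by
  simp [Bbot]

def Bc4 : Fin 4 → Fin 4 → Bool := fun i j => decide ((i - j).val = 1) || decide ((j - i).val = 1)

lemma c4_adj (i j : Fin 4) : (cycleGraph 4).Adj i j ↔ Bc4 i j = true := by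
  rw [cycleGraph_adj']; simp [Bc4]

-- decide checks
lemma gem_check : ∀ v0 v1 v2 v3 x : Fin 5,
    ¬(PC true v0 v1 ∧ PC true v1 v2 ∧ PC true v2 v3 ∧
      PC true v0 x ∧ PC true v1 x ∧ PC true v2 x ∧ PC true v3 x ∧
      PC false v0 v2 ∧ PC false v0 v3 ∧ PC false v1 v3) := by decide

lemma hvn_check : ∀ x y z p q : Fin 5,
    ¬(PC true x y ∧ PC false x z ∧ PC false y z ∧
      PC true x p ∧ PC true x q ∧ PC true y p ∧ PC true y q ∧
      PC true z p ∧ PC true z q ∧ PC true p q) := by decide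

lemma bot_check : ∀ x y z : Fin 5,
    ¬(PC false x y ∧ PC false x z ∧ PC false y z) := by decide

lemma c4_check : ∀ v0 v1 v2 v3 : Fin 5,
    ¬(PC true v0 v1 ∧ PC true v1 v2 ∧ PC true v2 v3 ∧ PC true v0 v3 ∧
      PC false v0 v2 ∧ PC false v1 v3) := by decide

lemma gem_free (n : ℕ) : (Y n).HFree gem := by
  rintro ⟨f⟩
  have key := key_of_emb gem Bgem gem_adj f
  exact gem_check _ _ _ _ _
    ⟨key (Sum.inl 0) (Sum.inl 1) (by decide), key (Sum.inl 1) (Sum.inl 2) (by decide),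
     key (Sum.inl 2) (Sum.inl 3) (by decide),
     key (Sum.inl 0) (Sum.inr 0) (by decide), key (Sum.inl 1) (Sum.inr 0) (by decide),
     key (Sum.inl 2) (Sum.inr 0) (by decide), key (Sum.inl 3) (Sum.inr 0) (by decide),
     key (Sum.inl 0) (Sum.inl 2) (by decide), key (Sum.inl 0) (Sum.inl 3) (by decide),
     key (Sum.inl 1) (Sum.inl 3) (by decide)⟩

lemma hvn_free (n : ℕ) : (Y n).HFree (K2K1JoinK 2) := by
  rintro ⟨f⟩
  have key := key_of_emb _ Bhvn hvn_adj f
  exact hvn_check _ _ _ _ _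
    ⟨key (Sum.inl (Sum.inl 0)) (Sum.inl (Sum.inl 1)) (by decide),
     key (Sum.inl (Sum.inl 0)) (Sum.inl (Sum.inr 0)) (by decide),
     key (Sum.inl (Sum.inl 1)) (Sum.inl (Sum.inr 0)) (by decide),
     key (Sum.inl (Sum.inl 0)) (Sum.inr 0) (by decide),
     key (Sum.inl (Sum.inl 0)) (Sum.inr 1) (by decide),
     key (Sum.inl (Sum.inl 1)) (Sum.inr 0) (by decide),
     key (Sum.inl (Sum.inl 1)) (Sum.inr 1) (by decide),
     key (Sum.inl (Sum.inr 0)) (Sum.inr 0) (by decide),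
     key (Sum.inl (Sum.inr 0)) (Sum.inr 1) (by decide),
     key (Sum.inr 0) (Sum.inr 1) (by decide)⟩

lemma bot_free (n : ℕ) : (Y n).HFree (⊥ : SimpleGraph (Fin 3)) := by
  rintro ⟨f⟩
  have key := key_of_emb _ Bbot bot_adj f
  exact bot_check _ _ _
    ⟨key 0 1 (by decide), key 0 2 (by decide), key 1 2 (by decide)⟩

lemma c4_free (n : ℕ) : (Y n).HFree (cycleGraph 4) := by
  rintro ⟨f⟩
  have key := key_of_emb _ Bc4 c4_adj f
  exact c4_check _ _ _ _
    ⟨key 0 1 (by decide), key 1 2 (by decide), key 2 3 (by decide), key 0 3 (by decide),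
     key 0 2 (by decide), key 1 3 (by decide)⟩

end S13

/-- `Yₙ` has chromatic number `n + 2`, clique number `n + 1`, and is gem-free, HVN-free,
`3K₁`-free and `C₄`-free. -/
theorem stmt13 (n : ℕ) (hn : 1 ≤ n) :
    (Y n).chromaticNumber = ↑(n + 2) ∧
    (Y n).cliqueNum = n + 1 ∧
    (Y n).HFree gem ∧
    (Y n).HFree (K2K1JoinK 2) ∧
    (Y n).HFree (⊥ : SimpleGraph (Fin 3)) ∧
    (Y n).HFree (cycleGraph 4) :=
  ⟨S13.chrom_eq hn, S13.cliqueNum_eq hn, S13.gem_free n, S13.hvn_free n,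
   S13.bot_free n, S13.c4_free n⟩
end

section
/- Let n be a positive integer and let G be a (P₄ ∨ Kₙ)-free graph containing an induced 5-cycle Q = {v₁, v₂, v₃, v₄, v₅} with vᵢ adjacent to v_{i+1} (indices modulo 5). For each i, let Dᵢ = {u ∈ V(G)\Q : N(u) ∩ Q = Q\{vᵢ}} and F = {u ∈ V(G)\Q : N(u) ∩ Q = Q}. Then for each i, the clique number of the subgraph of G induced by Dᵢ ∪ F is at most n − 1. -/
open SimpleGraph

/-- `Aᵢ`: vertices outside the induced five-cycle `v` whose neighbourhood on the cycle
is exactly `{v (i-1), v (i+1)}`. -/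
def Aset {V : Type*} (G : SimpleGraph V) (v : Fin 5 → V) (i : Fin 5) : Set V :=
  {u | u ∉ Set.range v ∧ G.neighborSet u ∩ Set.range v = {v (i - 1), v (i + 1)}}

/-- `Bᵢ`: vertices outside the induced five-cycle `v` whose neighbourhood on the cycle
is exactly `{v i, v (i-2), v (i+2)}`. -/
def Bset {V : Type*} (G : SimpleGraph V) (v : Fin 5 → V) (i : Fin 5) : Set V :=
  {u | u ∉ Set.range v ∧ G.neighborSet u ∩ Set.range v = {v i, v (i - 2), v (i + 2)}}

/-- `Dᵢ`: vertices outside the induced five-cycle `v` whose neighbourhood on the cycle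
is exactly `Q \ {v i}`. -/
def Dset {V : Type*} (G : SimpleGraph V) (v : Fin 5 → V) (i : Fin 5) : Set V :=
  {u | u ∉ Set.range v ∧ G.neighborSet u ∩ Set.range v = Set.range v \ {v i}}

/-- `F`: vertices outside the induced five-cycle `v` adjacent to all of the cycle. -/
def Fset {V : Type*} (G : SimpleGraph V) (v : Fin 5 → V) : Set V :=
  {u | u ∉ Set.range v ∧ G.neighborSet u ∩ Set.range v = Set.range v}

/-- `Z`: vertices outside the induced five-cycle `v` with no neighbour on the cycle. -/
def Zset {V : Type*} (G : SimpleGraph V) (v : Fin 5 → V) : Set V :=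
  {u | u ∉ Set.range v ∧ G.neighborSet u ∩ Set.range v = ∅}

def c45 (a : Fin 4) : Fin 5 := ⟨a.val, by omega⟩

lemma c45_inj : Function.Injective c45 := by decide

lemma c45_ne (a : Fin 4) : (1 : Fin 5) + c45 a ≠ 0 := by revert a; decide

lemma path_helper (a b : Fin 4) :
    (c45 b = c45 a + 1 ∨ c45 a = c45 b + 1) ↔ ((a:ℕ) + 1 = b ∨ (b:ℕ) + 1 = a) := by
  revert a b; decide

/-- In a `(P₄ ∨ Kₙ)`-free graph with an induced five-cycle, each `Dᵢ ∪ F` induces a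
subgraph of clique number at most `n − 1`. -/
theorem stmt15 (n : ℕ) (hn : 1 ≤ n) {V : Type} [Fintype V] (G : SimpleGraph V)
    (hfree : G.HFree (P4JoinK n))
    (v : Fin 5 → V) (hv : Function.Injective v)
    (hc5 : ∀ i j : Fin 5, G.Adj (v i) (v j) ↔ j = i + 1 ∨ i = j + 1) :
    ∀ i : Fin 5, ∀ s : Finset V, ↑s ⊆ Dset G v i ∪ Fset G v → G.IsClique ↑s →
      s.card ≤ n - 1 := by
  intro i s hsub hclique
  by_contra hcard
  push_neg at hcard
  have hns : n ≤ s.card := by omega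
  obtain ⟨t, hts, htc⟩ := Finset.exists_subset_card_eq hns
  -- f : Fin n → V landing in t
  set e := t.equivFin with he
  have f : Fin n → V := fun k => (e.symm (Fin.cast htc.symm k) : V)
  set f : Fin n → V := fun k => (e.symm (Fin.cast htc.symm k) : V) with hf
  have hfinj : Function.Injective f := by
    intro a b hab
    have := Subtype.ext hab
    simpa using congrArg (Fin.cast htc) (e.symm.injective this)
  have hfs : ∀ k, f k ∈ s := fun k => hts (e.symm (Fin.cast htc.symm k)).2
  -- facts about members of s
  have hkey : ∀ u ∈ s, u ∉ Set.range v ∧ ∀ j : Fin 5, j ≠ i → G.Adj u (v j) := by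
    intro u hu
    rcases hsub hu with h | h
    · refine ⟨h.1, fun j hj => ?_⟩
      have : v j ∈ G.neighborSet u ∩ Set.range v := by
        rw [h.2]
        exact ⟨⟨j, rfl⟩, fun hh => hj (hv hh)⟩
      exact this.1
    · refine ⟨h.1, fun j _ => ?_⟩
      have : v j ∈ G.neighborSet u ∩ Set.range v := by
        rw [h.2]; exact ⟨j, rfl⟩
      exact this.1
  have hne_i : ∀ a : Fin 4, i + 1 + c45 a ≠ i := by
    intro a h
    apply c45_ne a
    have : i + (1 + c45 a) = i + 0 := by rw [← add_assoc, h, add_zero]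
    exact add_left_cancel this
  -- the embedding
  refine hfree ⟨⟨⟨Sum.elim (fun a => v (i + 1 + c45 a)) f, ?_⟩, ?_⟩⟩
  · rintro (a | a) (b | b) hab <;> simp only [Sum.elim_inl, Sum.elim_inr] at hab
    · have := hv hab
      have : c45 a = c45 b := by
        have h2 : i + 1 + c45 a = i + 1 + c45 b := this
        exact add_left_cancel h2
      exact congrArg Sum.inl (c45_inj this)
    · exact absurd ⟨_, hab⟩ (hkey _ (hfs b)).1
    · exact absurd ⟨_, hab.symm⟩ (hkey _ (hfs a)).1
    · exact congrArg Sum.inr (hfinj hab)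
  · rintro (a | a) (b | b) <;>
      simp only [Function.Embedding.coeFn_mk, Sum.elim_inl, Sum.elim_inr, P4JoinK,
        SimpleGraph.join, top_adj]
    · change G.Adj (v (i + 1 + c45 a)) (v (i + 1 + c45 b)) ↔ _
      rw [hc5, SimpleGraph.pathGraph_adj, ← path_helper]
      constructor
      · rintro (h | h)
        · exact Or.inl (add_left_cancel
            (show i + 1 + c45 b = i + 1 + (c45 a + 1) by rw [h]; abel))
        · exact Or.inr (add_left_cancel
            (show i + 1 + c45 a = i + 1 + (c45 b + 1) by rw [h]; abel))
      · rintro (h | h)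
        · exact Or.inl (by rw [h]; abel)
        · exact Or.inr (by rw [h]; abel)
    · simp only [iff_true]
      exact ((hkey _ (hfs b)).2 _ (hne_i a)).symm
    · simp only [iff_true]
      exact (hkey _ (hfs a)).2 _ (hne_i b)
    · constructor
      · intro h hab
        exact G.loopless.irrefl _ (hab ▸ h)
      · intro h
        exact hclique (hfs a) (hfs b) (fun hh => h (hfinj hh))
end
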